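/- arXiv:1302.2662 — 7 statements merged into one kernel-verified Lean document; each statement's English description precedes it below -/
import Mathlib

section
/- Let a_1, …, a_n be pairwise distinct positive integers, let x ∈ ℂ with 0 < |x| < 1, fix an index i ∈ {1, …, n}, and let w ∈ ℂ satisfy w^{a_i} = x. Then the function z ↦ (z − w)·F_A(x,z) tends to 1/( a_i (1 − x²) ∏_{j ≠ i} (1 − x w^{a_j})(1 − x w^{−a_j}) ) as z tends to w with z ≠ w; in particular, F_A(x,·) has a simple pole at z = w with this value as its residue. -/
open Filter Topology Finset

/-- For pairwise distinct positive weights `a`, `0 < |x| < 1`, and `w` an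
`a i`-th root of `x`, the Molien integrand
`F_A(x,z) = 1/(z * ∏ j, (1 - x z^(a j))(1 - x z^(-a j)))` has a simple pole at `z = w`:
`(z - w) * F_A(x,z)` tends to
`1/(a i * (1 - x²) * ∏_{j ≠ i} (1 - x w^(a j))(1 - x w^(-a j)))` as `z → w`, `z ≠ w`. -/
theorem molien_integrand_simple_pole (n : ℕ) (a : Fin n → ℕ)
    (hpos : ∀ i, 0 < a i) (hdist : Function.Injective a)
    (x : ℂ) (hx0 : x ≠ 0) (hx1 : ‖x‖ < 1)
    (i : Fin n) (w : ℂ) (hw : w ^ a i = x) :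
    Tendsto
      (fun z : ℂ => (z - w) *
        (1 / (z * ∏ j, ((1 - x * z ^ a j) * (1 - x * (z ^ a j)⁻¹)))))
      (𝓝[≠] w)
      (𝓝 (1 / ((a i : ℂ) * (1 - x ^ 2) *
        ∏ j ∈ Finset.univ.erase i,
          ((1 - x * w ^ a j) * (1 - x * (w ^ a j)⁻¹))))) := by
  have hm0 : 0 < a i := hpos i
  have hw0 : w ≠ 0 := by
    intro h
    apply hx0
    rw [← hw, h, zero_pow hm0.ne']
  have hwpos : 0 < ‖w‖ := norm_pos_iff.mpr hw0
  have hwn : ‖w‖ < 1 := by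
    by_contra h
    push_neg at h
    have h1 : (1:ℝ) ≤ ‖w‖ ^ a i := one_le_pow₀ h
    rw [← norm_pow, hw] at h1
    linarith
  set Q : ℂ → ℂ := fun z =>
      ∏ j ∈ Finset.univ.erase i, ((1 - x * z ^ a j) * (1 - x * (z ^ a j)⁻¹)) with hQdef
  have hwpow : ∀ j, w ^ a j ≠ 0 := fun j => pow_ne_zero _ hw0
  have hx2 : (1 : ℂ) - x ^ 2 ≠ 0 := by
    intro h
    have h1 : x ^ 2 = 1 := by linear_combination -h
    have h2 := congrArg norm h1
    rw [norm_pow, norm_one] at h2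
    nlinarith [norm_nonneg x]
  have hfac1 : ∀ j : Fin n, (1 : ℂ) - x * w ^ a j ≠ 0 := by
    intro j h
    have h1 : x * w ^ a j = 1 := by linear_combination -h
    have h2 := congrArg norm h1
    rw [norm_mul, norm_pow, norm_one] at h2
    have h3 : ‖w‖ ^ a j ≤ 1 := pow_le_one₀ (norm_nonneg w) hwn.le
    have h4 : 0 < ‖x‖ := norm_pos_iff.mpr hx0
    nlinarith
  have hfac2 : ∀ j ∈ Finset.univ.erase i, (1:ℂ) - x * (w ^ a j)⁻¹ ≠ 0 := by
    intro j hj h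
    have hji : j ≠ i := Finset.ne_of_mem_erase hj
    have h1 : w ^ a j = x := by
      field_simp at h
      linear_combination h
    have h2 : ‖w‖ ^ a j = ‖w‖ ^ a i := by
      rw [← norm_pow, h1, ← hw, norm_pow]
    have h3 : a j = a i := by
      by_contra hne
      rcases Nat.lt_or_ge (a j) (a i) with hlt | hge
      · have := pow_lt_pow_right_of_lt_one₀ hwpos hwn hlt
        rw [h2] at this; exact lt_irrefl _ this
      · have hlt : a i < a j := lt_of_le_of_ne hge (fun hh => hne hh.symm)
        have := pow_lt_pow_right_of_lt_one₀ hwpos hwn hlt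
        rw [h2] at this; exact lt_irrefl _ this
    exact hji (hdist h3)
  have hQw : Q w ≠ 0 := by
    rw [hQdef]
    exact Finset.prod_ne_zero_iff.mpr fun j hj =>
      mul_ne_zero (hfac1 j) (hfac2 j hj)
  -- slope limit
  have hderiv : Tendsto (fun z : ℂ => (z ^ a i - w ^ a i) / (z - w)) (𝓝[≠] w)
      (𝓝 ((a i : ℂ) * w ^ (a i - 1))) := by
    have h := hasDerivAt_pow (a i) w
    rw [hasDerivAt_iff_tendsto_slope, slope_fun_def_field] at h
    exact h
  have hd0 : (a i : ℂ) * w ^ (a i - 1) ≠ 0 :=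
    mul_ne_zero (Nat.cast_ne_zero.mpr hm0.ne') (pow_ne_zero _ hw0)
  have hf1 : Tendsto (fun z : ℂ => ((z ^ a i - w ^ a i) / (z - w))⁻¹) (𝓝[≠] w)
      (𝓝 (((a i : ℂ) * w ^ (a i - 1))⁻¹)) := hderiv.inv₀ hd0
  -- continuous part
  have hQcont : Tendsto Q (𝓝 w) (𝓝 (Q w)) := by
    rw [hQdef]
    apply tendsto_finset_prod
    intro j _
    have h1 : Tendsto (fun z : ℂ => z ^ a j) (𝓝 w) (𝓝 (w ^ a j)) :=
      ((continuous_pow (a j)).continuousAt : ContinuousAt (fun z : ℂ => z ^ a j) w)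
    exact ((tendsto_const_nhds.sub (tendsto_const_nhds.mul h1))).mul
      (tendsto_const_nhds.sub (tendsto_const_nhds.mul (h1.inv₀ (hwpow j))))
  have hDval : w * (1 - x * w ^ a i) * Q w ≠ 0 := by
    have : (1:ℂ) - x * w ^ a i = 1 - x ^ 2 := by rw [hw]; ring
    rw [this]
    exact mul_ne_zero (mul_ne_zero hw0 hx2) hQw
  have hf2 : Tendsto (fun z : ℂ => z ^ a i * (z * (1 - x * z ^ a i) * Q z)⁻¹) (𝓝[≠] w)
      (𝓝 (w ^ a i * (w * (1 - x * w ^ a i) * Q w)⁻¹)) := by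
    apply Tendsto.mono_left _ nhdsWithin_le_nhds
    have h1 : Tendsto (fun z : ℂ => z ^ a i) (𝓝 w) (𝓝 (w ^ a i)) :=
      ((continuous_pow (a i)).continuousAt : ContinuousAt (fun z : ℂ => z ^ a i) w)
    exact h1.mul (((tendsto_id.mul (tendsto_const_nhds.sub
      (tendsto_const_nhds.mul h1))).mul hQcont).inv₀ hDval)
  have hg : Tendsto (fun z : ℂ => ((z ^ a i - w ^ a i) / (z - w))⁻¹ *
      (z ^ a i * (z * (1 - x * z ^ a i) * Q z)⁻¹)) (𝓝[≠] w)
      (𝓝 (1 / ((a i : ℂ) * (1 - x ^ 2) * Q w))) := by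
    have hlim := hf1.mul hf2
    have hval : ((a i : ℂ) * w ^ (a i - 1))⁻¹ * (w ^ a i * (w * (1 - x * w ^ a i) * Q w)⁻¹)
        = 1 / ((a i : ℂ) * (1 - x ^ 2) * Q w) := by
      obtain ⟨k, hk⟩ : ∃ k, a i = k + 1 := ⟨a i - 1, (Nat.succ_pred_eq_of_pos hm0).symm⟩
      have hxw : (1:ℂ) - x * w ^ a i = 1 - x ^ 2 := by rw [hw]; ring
      rw [hxw, hk]
      simp only [Nat.add_sub_cancel]
      have hca : ((k:ℂ) + 1) ≠ 0 := by
        have : ((k + 1 : ℕ) : ℂ) ≠ 0 := Nat.cast_ne_zero.mpr (Nat.succ_ne_zero k)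
        simpa using this
      have hwk : w ^ k ≠ 0 := pow_ne_zero _ hw0
      field_simp
      ring
    rw [← hval]
    exact hlim
  refine hg.congr' ?_
  have h0 : ∀ᶠ z in 𝓝[≠] w, z ≠ 0 :=
    (eventually_ne_nhds hw0).filter_mono nhdsWithin_le_nhds
  filter_upwards [h0] with z hz
  have hzm : z ^ a i ≠ 0 := pow_ne_zero _ hz
  have hsplit : ∏ j, ((1 - x * z ^ a j) * (1 - x * (z ^ a j)⁻¹))
      = ((1 - x * z ^ a i) * (1 - x * (z ^ a i)⁻¹)) * Q z := by
    rw [hQdef]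
    exact (Finset.mul_prod_erase Finset.univ _ (Finset.mem_univ i)).symm
  have hkey : (1:ℂ) - x * (z ^ a i)⁻¹ = (z ^ a i - w ^ a i) / z ^ a i := by
    rw [hw]
    field_simp
  rw [hsplit, hkey]
  simp only [div_eq_mul_inv, mul_inv, inv_inv, one_mul]
  ring
end

section
/- Let n ≥ 2. There exists a continuous function G : (0,∞)^n → ℝ such that G(c_1, …, c_n) = Σ_{i=1}^n c_i^{2n−3} / ∏_{j ≠ i} (c_i² − c_j²) whenever c_1, …, c_n are pairwise distinct, and G(c) > 0 for every c ∈ (0,∞)^n. In other words, the rational expression Σ_{i=1}^n c_i^{2n−3}/∏_{j≠i}(c_i² − c_j²), a priori defined only for pairwise distinct positive reals, extends to a continuous strictly positive function on all of (0,∞)^n. -/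
open Finset MeasureTheory Set Real

lemma interp_identity (n : ℕ) (hn : 1 ≤ n) (x : Fin n → ℝ) (hx : Function.Injective x)
    (u : ℝ) :
    ∑ i, (x i ^ (n - 1) / ∏ j ∈ Finset.univ.erase i, (x i - x j)) *
      ∏ j ∈ Finset.univ.erase i, (x j + u) = u ^ (n - 1) := by
  classical
  set B : Fin n → ℝ := fun i => x i ^ (n - 1) / ∏ j ∈ Finset.univ.erase i, (x i - x j) with hB
  set P : Polynomial ℝ :=
    (∑ i, Polynomial.C (B i) * ∏ j ∈ Finset.univ.erase i, (Polynomial.C (x j) + Polynomial.X))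
      - Polynomial.X ^ (n - 1) with hPdef
  have hprodne : ∀ k : Fin n, (∏ j ∈ Finset.univ.erase k, (x k - x j)) ≠ 0 := by
    intro k
    apply Finset.prod_ne_zero_iff.2
    intro j hj
    have : j ≠ k := Finset.ne_of_mem_erase hj
    exact sub_ne_zero.2 fun h => this (hx h.symm)
  have hP : P = 0 := by
    apply Polynomial.eq_zero_of_natDegree_lt_card_of_eval_eq_zero P
      (f := fun i : Fin n => -(x i))
    · intro a b hab
      exact hx (neg_injective hab)
    · intro k
      simp only [hPdef, Polynomial.eval_sub, Polynomial.eval_finset_sum, Polynomial.eval_mul,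
        Polynomial.eval_C, Polynomial.eval_prod, Polynomial.eval_add, Polynomial.eval_X,
        Polynomial.eval_pow]
      have hsum : ∑ i, B i * ∏ j ∈ Finset.univ.erase i, (x j + -x k)
          = B k * ∏ j ∈ Finset.univ.erase k, (x j + -x k) := by
        apply Finset.sum_eq_single_of_mem k (Finset.mem_univ k)
        intro i _ hik
        have hk : k ∈ Finset.univ.erase i := Finset.mem_erase.2 ⟨fun h => hik h.symm, Finset.mem_univ k⟩
        rw [Finset.prod_eq_zero hk (by ring), mul_zero]
      rw [hsum]
      have hflip : ∏ j ∈ Finset.univ.erase k, (x j + -x k)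
          = (-1) ^ (n - 1) * ∏ j ∈ Finset.univ.erase k, (x k - x j) := by
        have hcard : (Finset.univ.erase k).card = n - 1 := by
          simp [Finset.card_erase_of_mem]
        rw [← hcard, ← Finset.prod_const, ← Finset.prod_mul_distrib]
        apply Finset.prod_congr rfl
        intro j _
        ring
      rw [hflip,
        show B k * ((-1 : ℝ) ^ (n - 1) * ∏ j ∈ Finset.univ.erase k, (x k - x j))
            = (-1 : ℝ) ^ (n - 1) * (B k * ∏ j ∈ Finset.univ.erase k, (x k - x j)) from by ring,
        hB, div_mul_cancel₀ _ (hprodne k), ← neg_pow, sub_self]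
    · have h1 : (∑ i, Polynomial.C (B i) *
          ∏ j ∈ Finset.univ.erase i, (Polynomial.C (x j) + Polynomial.X)).natDegree ≤ n - 1 := by
        apply Polynomial.natDegree_sum_le_of_forall_le
        intro i _
        apply le_trans (Polynomial.natDegree_mul_le)
        rw [Polynomial.natDegree_C]
        simp only [zero_add]
        apply le_trans (Polynomial.natDegree_prod_le _ _)
        apply le_trans (Finset.sum_le_card_nsmul _ _ 1 ?_)
        · simp [Finset.card_erase_of_mem]
        · intro j _
          apply le_trans (Polynomial.natDegree_add_le _ _)
          simp
      have h2 : (Polynomial.X ^ (n - 1) : Polynomial ℝ).natDegree ≤ n - 1 := by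
        simp
      have := Polynomial.natDegree_sub_le _ _ |>.trans
        (max_le h1 h2 : max _ _ ≤ n - 1)
      rw [← hPdef] at this
      simpa using lt_of_le_of_lt this (by omega)
  have := congrArg (Polynomial.eval u) hP
  simp only [hPdef, Polynomial.eval_sub, Polynomial.eval_finset_sum, Polynomial.eval_mul,
    Polynomial.eval_C, Polynomial.eval_prod, Polynomial.eval_add, Polynomial.eval_X,
    Polynomial.eval_pow, Polynomial.eval_zero, sub_eq_zero] at this
  exact this


section aux
variable {n : ℕ}

lemma sq_inj_of_pos {c : Fin n → ℝ} (hc : ∀ i, 0 < c i) (hcinj : Function.Injective c) :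
    Function.Injective fun i => (c i) ^ 2 := by
  intro i j h
  simp only at h
  apply hcinj
  nlinarith [hc i, hc j]

lemma partial_fractions (hn : 1 ≤ n) (x : Fin n → ℝ) (hx : Function.Injective x)
    (hxpos : ∀ i, 0 < x i) (s : ℝ) :
    s ^ (2 * n - 2) / ∏ i, (x i + s ^ 2)
      = ∑ i, (x i ^ (n - 1) / ∏ j ∈ Finset.univ.erase i, (x i - x j)) * (x i + s ^ 2)⁻¹ := by
  classical
  have key := interp_identity n hn x hx (s ^ 2)
  have hpos : ∀ i : Fin n, 0 < x i + s ^ 2 := fun i => by have := hxpos i; positivity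
  have hne : ∀ i : Fin n, x i + s ^ 2 ≠ 0 := fun i => (hpos i).ne'
  have hE : ∀ i : Fin n, (∏ j ∈ Finset.univ.erase i, (x j + s ^ 2)) ≠ 0 := fun i =>
    Finset.prod_ne_zero_iff.2 fun j _ => hne j
  have hs2 : s ^ (2 * n - 2) = (s ^ 2) ^ (n - 1) := by
    rw [← pow_mul]
    congr 1
    omega
  rw [hs2, ← key, Finset.sum_div]
  apply Finset.sum_congr rfl
  intro i _
  rw [← Finset.mul_prod_erase Finset.univ _ (Finset.mem_univ i)]
  rw [mul_comm (x i + s ^ 2), mul_div_assoc, ← div_div,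
    div_self (hE i), one_div]

lemma integral_inv_sq_add {a : ℝ} (ha : 0 < a) :
    ∫ s in Ioi (0 : ℝ), (a ^ 2 + s ^ 2)⁻¹ = π / (2 * a) := by
  have h1 : ∀ s : ℝ, (a ^ 2 + s ^ 2)⁻¹ = (a ^ 2)⁻¹ * (1 + (a⁻¹ * s) ^ 2)⁻¹ := by
    intro s
    rw [← mul_inv]
    congr 1
    field_simp
  simp_rw [h1]
  rw [MeasureTheory.integral_const_mul]
  have h2 := integral_comp_mul_left_Ioi (fun t : ℝ => (1 + t ^ 2)⁻¹) 0 (inv_pos.2 ha)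
  simp only [mul_zero] at h2
  rw [h2, integral_Ioi_inv_one_add_sq, smul_eq_mul]
  rw [arctan_zero, sub_zero, inv_inv]
  field_simp

lemma integrable_bound {ε : ℝ} (hε : 0 < ε) :
    Integrable (fun s : ℝ => (ε + s ^ 2)⁻¹) := by
  have hcont : Continuous fun s : ℝ => (ε + s ^ 2)⁻¹ := by
    apply Continuous.inv₀ (by continuity)
    intro s
    positivity
  apply Integrable.mono' (integrable_inv_one_add_sq.const_mul (ε⁻¹ + 1))
    hcont.aestronglyMeasurable
  apply ae_of_all
  intro s
  have h2 : (0:ℝ) < ε + s ^ 2 := by positivity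
  have h3 : (0:ℝ) < 1 + s ^ 2 := by positivity
  rw [Real.norm_eq_abs, abs_of_pos (inv_pos.2 h2)]
  rw [inv_eq_one_div, div_le_iff₀ h2,
    show (ε⁻¹ + 1) * (1 + s ^ 2)⁻¹ * (ε + s ^ 2)
      = ((ε⁻¹ + 1) * (ε + s ^ 2)) / (1 + s ^ 2) from by ring, le_div_iff₀ h3, one_mul]
  have hinv : ε⁻¹ * ε = 1 := inv_mul_cancel₀ hε.ne'
  have h4 : 0 ≤ ε⁻¹ * s ^ 2 := by positivity
  nlinarith [hε.le]

lemma key_bound (hn : 1 ≤ n) {ε : ℝ} (hε : 0 < ε) {c : Fin n → ℝ}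
    (hc : ∀ i, ε ≤ (c i) ^ 2) {s : ℝ} (hs : 0 < s) :
    s ^ (2 * n - 2) / ∏ i, ((c i) ^ 2 + s ^ 2) ≤ (ε + s ^ 2)⁻¹ := by
  have hk : 0 < s ^ (2 * n - 2) := pow_pos hs _
  have hes : 0 < ε + s ^ 2 := by positivity
  have h1 : (ε + s ^ 2) ^ n ≤ ∏ i, ((c i) ^ 2 + s ^ 2) := by
    calc (ε + s ^ 2) ^ n = ∏ _i : Fin n, (ε + s ^ 2) := by
          rw [Finset.prod_const, Finset.card_univ, Fintype.card_fin]
      _ ≤ ∏ i, ((c i) ^ 2 + s ^ 2) := by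
          apply Finset.prod_le_prod (fun i _ => hes.le) (fun i _ => by nlinarith [hc i])
  have h2 : (ε + s ^ 2) * s ^ (2 * n - 2) ≤ (ε + s ^ 2) ^ n := by
    have hn' : n = 1 + (n - 1) := by omega
    rw [show (ε + s ^ 2) ^ n = (ε + s ^ 2) * (ε + s ^ 2) ^ (n - 1) from by
      rw [← pow_succ']; congr 1; omega]
    apply mul_le_mul_of_nonneg_left _ hes.le
    rw [show s ^ (2 * n - 2) = (s ^ 2) ^ (n - 1) from by rw [← pow_mul]; congr 1; omega]
    exact pow_le_pow_left₀ (sq_nonneg s) (by linarith) _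
  calc s ^ (2 * n - 2) / ∏ i, ((c i) ^ 2 + s ^ 2)
      ≤ s ^ (2 * n - 2) / ((ε + s ^ 2) * s ^ (2 * n - 2)) := by
        apply div_le_div_of_nonneg_left hk.le (by positivity) (le_trans h2 h1)
    _ = (ε + s ^ 2)⁻¹ := by
        rw [mul_comm (ε + s ^ 2) (s ^ (2 * n - 2)), ← div_div, div_self hk.ne', one_div]

end aux

lemma integrand_cont {n : ℕ} {c : Fin n → ℝ} (hc : ∀ i, 0 < c i) :
    Continuous fun s : ℝ => s ^ (2 * n - 2) / ∏ i, ((c i) ^ 2 + s ^ 2) := by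
  apply Continuous.div (by continuity) (by continuity)
  intro s
  apply ne_of_gt
  apply Finset.prod_pos
  intro i _
  have := hc i
  positivity

lemma integrable_integrand {n : ℕ} (hn : 1 ≤ n) {ε : ℝ} (hε : 0 < ε) {c : Fin n → ℝ}
    (hc : ∀ i, ε ≤ (c i) ^ 2) (hc' : ∀ i, 0 < c i) :
    IntegrableOn (fun s : ℝ => s ^ (2 * n - 2) / ∏ i, ((c i) ^ 2 + s ^ 2)) (Ioi 0) := by
  apply Integrable.mono' (integrable_bound hε).restrict
    (integrand_cont hc').aestronglyMeasurable
  rw [ae_restrict_iff' measurableSet_Ioi]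
  apply ae_of_all
  intro s hs
  have hs' : (0:ℝ) < s := hs
  rw [Real.norm_eq_abs, abs_of_nonneg]
  · exact key_bound hn hε hc hs'
  · apply div_nonneg (by positivity)
    apply Finset.prod_nonneg
    intro i _
    positivity

/-- the leading Laurent coefficient
`γ₀(c) = Σ_i c_i^{2n-3}/∏_{j≠i}(c_i² - c_j²)`, a priori defined for pairwise distinct
positive reals, extends to a continuous strictly positive function on `(0,∞)^n`. -/
theorem gamma0_extends_continuously_and_positively (n : ℕ) (hn : 2 ≤ n) :
    ∃ G : (Fin n → ℝ) → ℝ,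
      ContinuousOn G {c : Fin n → ℝ | ∀ i, 0 < c i} ∧
      (∀ c : Fin n → ℝ, (∀ i, 0 < c i) → Function.Injective c →
        G c = ∑ i, c i ^ (2 * n - 3) /
          ∏ j ∈ Finset.univ.erase i, (c i ^ 2 - c j ^ 2)) ∧
      (∀ c : Fin n → ℝ, (∀ i, 0 < c i) → 0 < G c) := by
  classical
  have hn1 : 1 ≤ n := by omega
  have hne : (Finset.univ : Finset (Fin n)).Nonempty := ⟨⟨0, by omega⟩, Finset.mem_univ _⟩
  refine ⟨fun c => (2 / π) * ∫ s in Ioi (0 : ℝ), s ^ (2 * n - 2) / ∏ i, ((c i) ^ 2 + s ^ 2),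
    ?_, ?_, ?_⟩
  · -- continuity
    intro c0 hc0
    apply ContinuousAt.continuousWithinAt
    apply ContinuousAt.mul continuousAt_const
    set m : ℝ := Finset.univ.inf' hne (fun i => (c0 i) ^ 2) with hm
    have hmpos : 0 < m := by
      rw [hm, Finset.lt_inf'_iff]
      intro i _
      have := hc0 i
      positivity
    set ε : ℝ := m / 2 with hεdef
    have hε : 0 < ε := by positivity
    have hU : {c : Fin n → ℝ | ∀ i, ε < (c i) ^ 2} ∈ nhds c0 := by
      apply IsOpen.mem_nhds
      · have : {c : Fin n → ℝ | ∀ i, ε < (c i) ^ 2} = ⋂ i, (fun c : Fin n → ℝ => (c i) ^ 2) ⁻¹' (Ioi ε) := by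
          ext c; simp [Set.mem_iInter]
        rw [this]
        exact isOpen_iInter_of_finite fun i =>
          (((continuous_apply i).pow 2).isOpen_preimage _ isOpen_Ioi)
      · intro i
        calc ε < m := by rw [hεdef]; linarith
          _ ≤ (c0 i) ^ 2 := Finset.inf'_le _ (Finset.mem_univ i)
    apply MeasureTheory.continuousAt_of_dominated (bound := fun s => (ε + s ^ 2)⁻¹)
    · filter_upwards [hU] with c hc
      have hc' : ∀ i, 0 < c i ^ 2 := fun i => lt_trans hε (hc i)
      apply Continuous.aestronglyMeasurable
      apply Continuous.div (by continuity) (by continuity)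
      intro s
      apply ne_of_gt
      apply Finset.prod_pos
      intro i _
      have := hc' i
      positivity
    · filter_upwards [hU] with c hc
      rw [ae_restrict_iff' measurableSet_Ioi]
      apply ae_of_all
      intro s hs
      have hs' : (0:ℝ) < s := hs
      rw [Real.norm_eq_abs, abs_of_nonneg]
      · exact key_bound hn1 hε (fun i => (hc i).le) hs'
      · apply div_nonneg (by positivity)
        apply Finset.prod_nonneg
        intro i _
        positivity
    · exact (integrable_bound hε).restrict
    · apply ae_of_all
      intro s
      apply ContinuousAt.div continuousAt_const
      · apply Continuous.continuousAt
        apply continuous_finset_prod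
        intro i _
        continuity
      · apply ne_of_gt
        apply Finset.prod_pos
        intro i _
        have := hc0 i
        positivity
  · -- the formula
    intro c hc hcinj
    have hx : Function.Injective fun i => (c i) ^ 2 := sq_inj_of_pos hc hcinj
    have hxpos : ∀ i, 0 < (c i) ^ 2 := fun i => by have := hc i; positivity
    have hDne : ∀ i : Fin n, (∏ j ∈ Finset.univ.erase i, ((c i) ^ 2 - (c j) ^ 2)) ≠ 0 := by
      intro i
      apply Finset.prod_ne_zero_iff.2
      intro j hj
      have hij : j ≠ i := Finset.ne_of_mem_erase hj
      exact sub_ne_zero.2 fun h => hij (hx h.symm)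
    change 2 / π * ∫ s in Ioi (0:ℝ), s ^ (2 * n - 2) / ∏ i, ((c i) ^ 2 + s ^ 2) = _
    have hpf : (fun s : ℝ => s ^ (2 * n - 2) / ∏ i, ((c i) ^ 2 + s ^ 2))
        = fun s : ℝ => ∑ i, (((c i) ^ 2) ^ (n - 1) /
            ∏ j ∈ Finset.univ.erase i, ((c i) ^ 2 - (c j) ^ 2)) * ((c i) ^ 2 + s ^ 2)⁻¹ := by
      funext s
      exact partial_fractions hn1 (fun i => (c i) ^ 2) hx hxpos s
    rw [hpf]
    rw [MeasureTheory.integral_finset_sum]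
    · have hterm : ∀ i : Fin n,
          ∫ s in Ioi (0:ℝ), (((c i) ^ 2) ^ (n - 1) /
              ∏ j ∈ Finset.univ.erase i, ((c i) ^ 2 - (c j) ^ 2)) * ((c i) ^ 2 + s ^ 2)⁻¹
            = (((c i) ^ 2) ^ (n - 1) /
              ∏ j ∈ Finset.univ.erase i, ((c i) ^ 2 - (c j) ^ 2)) * (π / (2 * c i)) := by
        intro i
        rw [MeasureTheory.integral_const_mul, integral_inv_sq_add (hc i)]
      rw [Finset.mul_sum]
      apply Finset.sum_congr rfl
      intro i _
      rw [hterm i]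
      have hpow : ((c i) ^ 2) ^ (n - 1) = c i ^ (2 * n - 3) * c i := by
        rw [← pow_mul, ← pow_succ]
        congr 1
        omega
      rw [hpow]
      have h1 : 2 / π * (π / (2 * c i)) * c i = 1 := by
        have hci := (hc i).ne'
        field_simp
      rw [show 2 / π * (c i ^ (2 * n - 3) * c i /
            (∏ j ∈ Finset.univ.erase i, ((c i) ^ 2 - (c j) ^ 2)) * (π / (2 * c i)))
          = c i ^ (2 * n - 3) / (∏ j ∈ Finset.univ.erase i, ((c i) ^ 2 - (c j) ^ 2))
            * (2 / π * (π / (2 * c i)) * c i) from by ring, h1, mul_one]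
    · intro i _
      exact ((integrable_bound (hxpos i)).restrict).const_mul _
  · -- positivity
    intro c hc
    have hεle : ∀ i, Finset.univ.inf' hne (fun i => (c i) ^ 2) ≤ (c i) ^ 2 :=
      fun i => Finset.inf'_le _ (Finset.mem_univ i)
    have hεpos : 0 < Finset.univ.inf' hne (fun i => (c i) ^ 2) := by
      rw [Finset.lt_inf'_iff]
      intro i _
      have := hc i
      positivity
    have hint := integrable_integrand hn1 hεpos hεle hc
    have hpos : 0 < ∫ s in Ioi (0:ℝ), s ^ (2 * n - 2) / ∏ i, ((c i) ^ 2 + s ^ 2) := by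
      rw [MeasureTheory.setIntegral_pos_iff_support_of_nonneg_ae _ hint]
      · apply lt_of_lt_of_le _ (measure_mono (?_ : Ioi (0:ℝ) ⊆ _))
        · simp [Real.volume_Ioi]
        · intro s hs
          have hs' : (0:ℝ) < s := hs
          constructor
          · apply ne_of_gt
            apply div_pos (pow_pos hs' _)
            apply Finset.prod_pos
            intro i _
            have := hc i
            positivity
          · exact hs
      · filter_upwards [ae_restrict_mem measurableSet_Ioi] with s hs
        apply div_nonneg (pow_nonneg (le_of_lt hs) _)
        apply Finset.prod_nonneg
        intro i _
        positivity
    have : (0:ℝ) < 2 / π := by positivity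
    exact mul_pos this hpos
end

section
/- Let n ≥ 2 and let a_1, …, a_n be pairwise distinct positive integers with gcd(a_1, …, a_n) = 1, and for each j set g_j = gcd{a_k : k ≠ j}. Then the rational number γ_2 := −(1/12) Σ_{i=1}^n ( a_i^{2n−5} / ∏_{j ≠ i} (a_i² − a_j²) ) · ( Σ_{j ≠ i} a_j² ) + (1/12) Σ_{j=1}^n Σ_{i ≠ j} a_i^{2n−5} (g_j² − 1) / ∏_{k ≠ i, j} (a_i² − a_k²) is strictly positive, and likewise γ_0 := Σ_{i=1}^n a_i^{2n−3}/∏_{j≠i}(a_i² − a_j²) is strictly positive. (Here a_i^{2n−5} denotes the integer power of a_i taken in ℚ, equal to 1/a_i when n = 2.) -/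
/-!
Write `D_p(s) = ∑_{i ∈ s} a_i ^ (2p - 1) / ∏_{j ∈ s, j ≠ i} (a_i² - a_j²)`. Since
`1 / a = (2 / π) ∫₀^∞ du / (u² + a²)`, partial fractions in `u²` give, for `p < |s|`,
`D_p(s) = (-1) ^ (|s| - 1 - p) (2 / π) ∫₀^∞ u^(2p) / ∏_{i ∈ s} (u² + a_i²) du`,
so `D_p(s)` has sign `(-1) ^ (|s| - 1 - p)`. Now `γ₀ = D_{n-1}(all)` is positive, and
`12 γ₂ = γ₀ - (∑_j a_j²) D_{n-2}(all) + ∑_j (g_j² - 1) D_{n-2}(all ∖ {j})`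
with `D_{n-2}(all) < 0`, `D_{n-2}(all ∖ {j}) > 0` and `g_j ≥ 1`.
-/

open Finset Real MeasureTheory Set Filter Polynomial Topology

section ArctanIntegral

variable {a : ℝ}

theorem hasDerivAt_inv_mul_arctan_div (ha : a ≠ 0) (u : ℝ) :
    HasDerivAt (fun u : ℝ => a⁻¹ * arctan (u / a)) ((u ^ 2 + a ^ 2)⁻¹) u := by
  have h := ((hasDerivAt_arctan (u / a)).comp u ((hasDerivAt_id u).div_const a)).const_mul a⁻¹
  refine h.congr_deriv ?_
  field_simp
  ring

theorem tendsto_inv_mul_arctan_div_atTop (ha : 0 < a) :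
    Tendsto (fun u : ℝ => a⁻¹ * arctan (u / a)) atTop (𝓝 (a⁻¹ * (π / 2))) :=
  ((tendsto_nhds_of_tendsto_nhdsWithin tendsto_arctan_atTop).comp
    (tendsto_id.atTop_div_const ha)).const_mul _

theorem integrableOn_Ioi_inv_sq_add_sq (ha : 0 < a) :
    IntegrableOn (fun u : ℝ => (u ^ 2 + a ^ 2)⁻¹) (Ioi 0) :=
  integrableOn_Ioi_deriv_of_nonneg' (fun u _ => hasDerivAt_inv_mul_arctan_div ha.ne' u)
    (fun u _ => by positivity) (tendsto_inv_mul_arctan_div_atTop ha)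

theorem integral_Ioi_inv_sq_add_sq (ha : 0 < a) :
    ∫ u in Ioi (0 : ℝ), (u ^ 2 + a ^ 2)⁻¹ = π / (2 * a) := by
  rw [integral_Ioi_of_hasDerivAt_of_nonneg' (fun u _ => hasDerivAt_inv_mul_arctan_div ha.ne' u)
    (fun u _ => by positivity) (tendsto_inv_mul_arctan_div_atTop ha)]
  field_simp
  simp

end ArctanIntegral

section PartialFractions

variable {ι K : Type*} [DecidableEq ι] [Field K] {s : Finset ι} {x : ι → K} {p : ℕ}

theorem sum_pow_mul_prod_lagrange (hx : InjOn x s) (hp : p < #s) (y : K) :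
    ∑ i ∈ s, x i ^ p * ∏ j ∈ s.erase i, ((x i - x j)⁻¹ * (y - x j)) = y ^ p := by
  have hdeg : ((X : K[X]) ^ p).degree < #s := by
    rw [degree_X_pow]
    exact_mod_cast hp
  simpa [Lagrange.interpolate_apply, Lagrange.basis, Lagrange.basisDivisor, eval_finsetSum,
    eval_prod] using (congrArg (eval y) (Lagrange.eq_interpolate hx hdeg)).symm

theorem sum_pow_div_prod_div_add (hx : InjOn x s) (hp : p < #s) {t : K}
    (ht : ∀ i ∈ s, t + x i ≠ 0) :
    ∑ i ∈ s, x i ^ p / (∏ j ∈ s.erase i, (x i - x j)) / (t + x i)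
      = (-1) ^ (#s - 1 - p) * t ^ p / ∏ i ∈ s, (t + x i) := by
  -- Clearing denominators turns this into the Lagrange identity at `y = -t`.
  rw [eq_div_iff (prod_ne_zero_iff.mpr ht), sum_mul]
  have hterm : ∀ i ∈ s,
      x i ^ p / (∏ j ∈ s.erase i, (x i - x j)) / (t + x i) * ∏ k ∈ s, (t + x k)
        = (-1) ^ (#s - 1) * (x i ^ p * ∏ j ∈ s.erase i, ((x i - x j)⁻¹ * (-t - x j))) := by
    intro i hi
    have hneg :
        ∏ j ∈ s.erase i, (-t - x j) = (-1) ^ (#s - 1) * ∏ j ∈ s.erase i, (t + x j) := by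
      rw [← card_erase_of_mem hi, ← prod_neg]
      exact prod_congr rfl fun j _ => by ring
    rw [prod_mul_distrib, prod_inv_distrib, hneg, ← mul_prod_erase s _ hi]
    field_simp [ht i hi]
    rw [← pow_mul, Even.neg_one_pow ⟨_, mul_two _⟩, mul_one]
  rw [sum_congr rfl hterm, ← mul_sum, sum_pow_mul_prod_lagrange hx hp, neg_pow t,
    show #s - 1 = (#s - 1 - p) + p by omega, Nat.add_sub_cancel, pow_add, mul_assoc,
    ← mul_assoc ((-1) ^ p), ← mul_pow]
  norm_num

end PartialFractions

/-- The divided difference of `x ↦ x ^ (p - 1/2)` at the nodes `a i ^ 2`, `i ∈ s`. -/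
def halfPowDividedDiff {ι K : Type*} [DecidableEq ι] [Field K] (s : Finset ι) (a : ι → K)
    (p : ℕ) : K :=
  ∑ i ∈ s, a i ^ (2 * p) / (a i * ∏ j ∈ s.erase i, (a i ^ 2 - a j ^ 2))

section Sign

variable {ι : Type*} [DecidableEq ι] {s : Finset ι} {a : ι → ℝ} {p : ℕ}

theorem sum_div_prod_mul_inv_sq_add_sq (ha : ∀ i ∈ s, 0 < a i) (hinj : InjOn a s)
    (hp : p < #s) (u : ℝ) :
    ∑ i ∈ s, (a i ^ 2) ^ p / (∏ j ∈ s.erase i, (a i ^ 2 - a j ^ 2)) * (u ^ 2 + a i ^ 2)⁻¹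
      = (-1) ^ (#s - 1 - p) * ((u ^ 2) ^ p / ∏ i ∈ s, (u ^ 2 + a i ^ 2)) := by
  have hinj_sq : InjOn (fun i => a i ^ 2) s := fun i hi j hj h =>
    hinj hi hj ((pow_left_inj₀ (ha i hi).le (ha j hj).le two_ne_zero).mp h)
  simp_rw [← div_eq_mul_inv, mul_div_assoc']
  exact sum_pow_div_prod_div_add hinj_sq hp fun i hi => by have := ha i hi; positivity

theorem integrableOn_Ioi_pow_div_prod_sq_add_sq (ha : ∀ i ∈ s, 0 < a i) (hinj : InjOn a s)
    (hp : p < #s) :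
    IntegrableOn (fun u : ℝ => (u ^ 2) ^ p / ∏ i ∈ s, (u ^ 2 + a i ^ 2)) (Ioi 0) := by
  have hsum := (integrable_finsetSum s fun i hi =>
    (integrableOn_Ioi_inv_sq_add_sq (ha i hi)).const_mul
      ((a i ^ 2) ^ p / ∏ j ∈ s.erase i, (a i ^ 2 - a j ^ 2))).const_mul ((-1) ^ (#s - 1 - p))
  refine IntegrableOn.congr_fun hsum (fun u _ => ?_) measurableSet_Ioi
  rw [sum_div_prod_mul_inv_sq_add_sq ha hinj hp, ← mul_assoc, ← pow_add, Even.neg_one_pow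
    ⟨_, rfl⟩, one_mul]

theorem halfPowDividedDiff_eq_integral (ha : ∀ i ∈ s, 0 < a i) (hinj : InjOn a s)
    (hp : p < #s) :
    halfPowDividedDiff s a p
      = (-1) ^ (#s - 1 - p) * (2 / π) *
          ∫ u in Ioi 0, (u ^ 2) ^ p / ∏ i ∈ s, (u ^ 2 + a i ^ 2) := by
  have hterm : ∀ i ∈ s, a i ^ (2 * p) / (a i * ∏ j ∈ s.erase i, (a i ^ 2 - a j ^ 2))
      = 2 / π * ∫ u in Ioi 0,
          (a i ^ 2) ^ p / (∏ j ∈ s.erase i, (a i ^ 2 - a j ^ 2)) * (u ^ 2 + a i ^ 2)⁻¹ := by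
    intro i hi
    rw [integral_const_mul, integral_Ioi_inv_sq_add_sq (ha i hi), pow_mul]
    have := (ha i hi).ne'
    field_simp
  rw [halfPowDividedDiff, sum_congr rfl hterm, ← mul_sum, ← integral_finsetSum s fun i hi =>
    (integrableOn_Ioi_inv_sq_add_sq (ha i hi)).const_mul _]
  simp_rw [sum_div_prod_mul_inv_sq_add_sq ha hinj hp, integral_const_mul]
  ring

theorem integral_Ioi_pow_div_prod_sq_add_sq_pos (ha : ∀ i ∈ s, 0 < a i) (hinj : InjOn a s)
    (hp : p < #s) :
    0 < ∫ u in Ioi 0, (u ^ 2) ^ p / ∏ i ∈ s, (u ^ 2 + a i ^ 2) := by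
  rw [setIntegral_pos_iff_support_of_nonneg_ae (Eventually.of_forall fun u => by positivity)
    (integrableOn_Ioi_pow_div_prod_sq_add_sq ha hinj hp)]
  have hsupp : Ioi (0 : ℝ) ⊆
      Function.support (fun u : ℝ => (u ^ 2) ^ p / ∏ i ∈ s, (u ^ 2 + a i ^ 2)) ∩ Ioi 0 :=
    fun u (hu : 0 < u) => ⟨Function.mem_support.mpr (by positivity), hu⟩
  exact (by simp : (0 : ENNReal) < volume (Ioi (0 : ℝ))).trans_le (measure_mono hsupp)

theorem neg_one_pow_mul_halfPowDividedDiff_pos (ha : ∀ i ∈ s, 0 < a i) (hinj : InjOn a s)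
    (hp : p < #s) : 0 < (-1) ^ (#s - 1 - p) * halfPowDividedDiff s a p := by
  rw [halfPowDividedDiff_eq_integral ha hinj hp, ← mul_assoc, ← mul_assoc, ← pow_add,
    Even.neg_one_pow ⟨_, rfl⟩, one_mul]
  exact mul_pos (by positivity) (integral_Ioi_pow_div_prod_sq_add_sq_pos ha hinj hp)

theorem Rat.cast_halfPowDividedDiff (s : Finset ι) (a : ι → ℚ) (p : ℕ) :
    ((halfPowDividedDiff s a p : ℚ) : ℝ) = halfPowDividedDiff s (fun i => (a i : ℝ)) p := by
  simp [halfPowDividedDiff]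

theorem neg_one_pow_mul_halfPowDividedDiff_pos_rat {a : ι → ℚ} (ha : ∀ i ∈ s, 0 < a i)
    (hinj : InjOn a s) (hp : p < #s) : 0 < (-1) ^ (#s - 1 - p) * halfPowDividedDiff s a p := by
  have h := neg_one_pow_mul_halfPowDividedDiff_pos (a := fun i => (a i : ℝ))
    (fun i hi => Rat.cast_pos.mpr (ha i hi)) (Rat.cast_injective.comp_injOn hinj) hp
  rw [← Rat.cast_halfPowDividedDiff] at h
  exact_mod_cast h

theorem halfPowDividedDiff_pos_of_card_eq {a : ι → ℚ} (ha : ∀ i ∈ s, 0 < a i)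
    (hinj : InjOn a s) (hcard : #s = p + 1) : 0 < halfPowDividedDiff s a p := by
  simpa [hcard] using neg_one_pow_mul_halfPowDividedDiff_pos_rat (p := p) ha hinj (by omega)

theorem halfPowDividedDiff_neg_of_card_eq {a : ι → ℚ} (ha : ∀ i ∈ s, 0 < a i)
    (hinj : InjOn a s) (hcard : #s = p + 2) : halfPowDividedDiff s a p < 0 := by
  simpa [hcard] using neg_one_pow_mul_halfPowDividedDiff_pos_rat (p := p) ha hinj (by omega)

end Sign

section Rearrangement

variable {ι K : Type*} [DecidableEq ι] [Field K] (s : Finset ι) (a : ι → K) (p : ℕ)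

theorem sum_pow_succ_div_prod_eq_halfPowDividedDiff (ha : ∀ i ∈ s, a i ≠ 0) :
    ∑ i ∈ s, a i ^ (2 * p + 1) / ∏ j ∈ s.erase i, (a i ^ 2 - a j ^ 2)
      = halfPowDividedDiff s a (p + 1) := by
  refine sum_congr rfl fun i hi => ?_
  rw [mul_add_one, pow_add, pow_succ, ← mul_div_mul_right _ _ (ha i hi)]
  ring

theorem sum_pow_div_div_prod_mul_sum_erase_sq :
    ∑ i ∈ s, a i ^ (2 * p) / a i / (∏ j ∈ s.erase i, (a i ^ 2 - a j ^ 2))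
        * ∑ j ∈ s.erase i, a j ^ 2
      = (∑ j ∈ s, a j ^ 2) * halfPowDividedDiff s a p - halfPowDividedDiff s a (p + 1) := by
  rw [halfPowDividedDiff, halfPowDividedDiff, mul_sum, ← sum_sub_distrib]
  refine sum_congr rfl fun i hi => ?_
  rw [sum_erase_eq_sub hi]
  ring

theorem sum_pow_div_mul_div_prod (c : K) :
    ∑ i ∈ s, a i ^ (2 * p) / a i * c / ∏ j ∈ s.erase i, (a i ^ 2 - a j ^ 2)
      = c * halfPowDividedDiff s a p := by
  rw [halfPowDividedDiff, mul_sum]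
  refine sum_congr rfl fun i _ => ?_
  ring

end Rearrangement

theorem zpow_two_mul_natCast_add_two_sub_five {K : Type*} [DivisionRing K] {x : K} (hx : x ≠ 0)
    (m : ℕ) : x ^ (2 * ((m + 2 : ℕ) : ℤ) - 5) = x ^ (2 * m) / x := by
  rw [show 2 * ((m + 2 : ℕ) : ℤ) - 5 = (2 * m : ℕ) - 1 by push_cast; ring, zpow_sub_one₀ hx,
    zpow_natCast, div_eq_mul_inv]

theorem Finset.one_le_gcd_of_pos {ι : Type*} {s : Finset ι} {f : ι → ℕ} (hs : s.Nonempty)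
    (hf : ∀ i ∈ s, 0 < f i) : 1 ≤ s.gcd f := by
  obtain ⟨i, hi⟩ := hs
  exact Nat.one_le_iff_ne_zero.mpr fun h => (hf i hi).ne' (gcd_eq_zero_iff.mp h i hi)

theorem gamma0_gamma2_positive_general (n : ℕ) (hn : 2 ≤ n) (a : Fin n → ℕ)
    (hpos : ∀ i, 0 < a i) (hdist : Function.Injective a) :
    (0 < -(1 / 12 : ℚ) * (∑ i,
          ((a i : ℚ) ^ (2 * (n : ℤ) - 5) /
              ∏ j ∈ Finset.univ.erase i, ((a i : ℚ) ^ 2 - (a j : ℚ) ^ 2)) *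
            ∑ j ∈ Finset.univ.erase i, (a j : ℚ) ^ 2)
      + (1 / 12 : ℚ) * ∑ j, ∑ i ∈ Finset.univ.erase j,
          (a i : ℚ) ^ (2 * (n : ℤ) - 5) *
            ((((Finset.univ.erase j).gcd a : ℕ) : ℚ) ^ 2 - 1) /
            ∏ k ∈ (Finset.univ.erase j).erase i,
              ((a i : ℚ) ^ 2 - (a k : ℚ) ^ 2))
    ∧
    (0 < ∑ i, (a i : ℚ) ^ (2 * n - 3) /
        ∏ j ∈ Finset.univ.erase i, ((a i : ℚ) ^ 2 - (a j : ℚ) ^ 2)) := by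
  obtain ⟨m, rfl⟩ : ∃ m, n = m + 2 := ⟨n - 2, by omega⟩
  have hA : ∀ i ∈ (univ : Finset (Fin (m + 2))), 0 < (a i : ℚ) := fun i _ => mod_cast hpos i
  have hAinj : InjOn (fun i => (a i : ℚ)) (univ : Finset (Fin (m + 2))) :=
    (Nat.cast_injective.comp hdist).injOn
  have hγ0 := halfPowDividedDiff_pos_of_card_eq hA hAinj (p := m + 1) (by simp)
  have hfull := halfPowDividedDiff_neg_of_card_eq hA hAinj (p := m) (by simp)
  have hpunct j := halfPowDividedDiff_pos_of_card_eq (s := univ.erase j) (p := m)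
    (fun i _ => hA i (mem_univ i)) (hAinj.mono (coe_subset.mpr (subset_univ _))) (by simp)
  have hγ0_eq := sum_pow_succ_div_prod_eq_halfPowDividedDiff univ (fun i => (a i : ℚ)) m
    fun i hi => (hA i hi).ne'
  have hγ2_eq := sum_pow_div_div_prod_mul_sum_erase_sq univ (fun i => (a i : ℚ)) m
  have hγ2_gcd_eq j := sum_pow_div_mul_div_prod (univ.erase j) (fun i => (a i : ℚ)) m
    (((univ.erase j).gcd a : ℕ) ^ 2 - 1)
  beta_reduce at hγ0_eq hγ2_eq hγ2_gcd_eq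
  simp_rw [show 2 * (m + 2) - 3 = 2 * m + 1 by omega,
    zpow_two_mul_natCast_add_two_sub_five (hA _ (mem_univ _)).ne', hγ0_eq, hγ2_eq, hγ2_gcd_eq]
  refine ⟨?_, hγ0⟩
  have hP : 0 < ∑ j, (a j : ℚ) ^ 2 := sum_pos (fun j _ => pow_pos (hA j (mem_univ j)) 2)
    univ_nonempty
  have hgcd_sum : 0 ≤ ∑ j, ((((univ.erase j).gcd a : ℕ) : ℚ) ^ 2 - 1) *
      halfPowDividedDiff (univ.erase j) (fun i => (a i : ℚ)) m :=
    sum_nonneg fun j _ => mul_nonneg (sub_nonneg.mpr (one_le_pow₀ (mod_cast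
      one_le_gcd_of_pos (by simp [← card_pos]) fun i _ => hpos i))) (hpunct j).le
  linarith [mul_neg_of_pos_of_neg hP hfull]

/-- Corollary: positivity of the Laurent coefficients: for pairwise
distinct positive weights with gcd 1, both
`γ₀ = Σ_i a_i^{2n-3}/∏_{j≠i}(a_i² - a_j²)` and
`γ₂ = -(1/12) Σ_i (a_i^{2n-5}/∏_{j≠i}(a_i²-a_j²)) Σ_{j≠i} a_j²
      + (1/12) Σ_j Σ_{i≠j} a_i^{2n-5}(g_j²-1)/∏_{k≠i,j}(a_i²-a_k²)`
are strictly positive rational numbers (the power `a_i^{2n-5}` is a `zpow` in `ℚ`). -/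
theorem gamma0_gamma2_positive (n : ℕ) (hn : 2 ≤ n) (a : Fin n → ℕ)
    (hpos : ∀ i, 0 < a i) (hdist : Function.Injective a)
    (hgcd : Finset.univ.gcd a = 1) :
    (0 < -(1 / 12 : ℚ) * (∑ i,
          ((a i : ℚ) ^ (2 * (n : ℤ) - 5) /
              ∏ j ∈ Finset.univ.erase i, ((a i : ℚ) ^ 2 - (a j : ℚ) ^ 2)) *
            ∑ j ∈ Finset.univ.erase i, (a j : ℚ) ^ 2)
      + (1 / 12 : ℚ) * ∑ j, ∑ i ∈ Finset.univ.erase j,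
          (a i : ℚ) ^ (2 * (n : ℤ) - 5) *
            ((((Finset.univ.erase j).gcd a : ℕ) : ℚ) ^ 2 - 1) /
            ∏ k ∈ (Finset.univ.erase j).erase i,
              ((a i : ℚ) ^ 2 - (a k : ℚ) ^ 2))
    ∧
    (0 < ∑ i, (a i : ℚ) ^ (2 * n - 3) /
        ∏ j ∈ Finset.univ.erase i, ((a i : ℚ) ^ 2 - (a j : ℚ) ^ 2)) :=
  gamma0_gamma2_positive_general n hn a hpos hdist
end

section
/- For every integer n ≥ 1, the following identity holds in the ring of formal power series ℚ[[t]]: (1 − t)^{2n−1} · Σ_{k=0}^∞ binom(n+k−1, k)² t^k = Σ_{k=0}^{n−1} binom(n−1, k)² t^k. -/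
/-!
Write `a = n - 1`. Since `Σ_k binom(2a+k, 2a) t^k = (1 - t)^{-(2a+1)}`, the identity is
equivalent to `Σ_k binom(a+k, k)² t^k = (Σ_i binom(a,i)² t^i) · Σ_k binom(2a+k, 2a) t^k`,
i.e. to the convolution identity `S_k := Σ_i binom(a,i)² binom(2a+k-i, 2a) = binom(a+k, k)²`.
Both sides satisfy the recurrence `(a+k+1)² S_k = (k+1)² S_{k+1}` with `S_0 = 1`; for the
convolution this follows from Zeilberger's creative telescoping with certificate
`G(k, i) = i² binom(a,i)² binom(2a+k+1-i, 2a)`.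
-/

open Finset PowerSeries

/-- `(a+k+1)² F(k,i) + G(k,i) = (k+1)² F(k+1,i) + G(k,i+1)` for
`F(k,i) = binom(a,i)² binom(2a+k-i, 2a)`, written with `k = i + j`. -/
theorem Nat.choose_sq_mul_choose_telescope (a i j : ℕ) :
    (a + i + j + 1) ^ 2 * (a.choose i ^ 2 * (2 * a + j).choose (2 * a))
      + i ^ 2 * (a.choose i ^ 2 * (2 * a + j + 1).choose (2 * a))
    = (i + j + 1) ^ 2 * (a.choose i ^ 2 * (2 * a + j + 1).choose (2 * a))
      + (i + 1) ^ 2 * (a.choose (i + 1) ^ 2 * (2 * a + j).choose (2 * a)) := by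
  rcases lt_or_ge a i with hai | hia
  · simp [Nat.choose_eq_zero_of_lt hai, Nat.choose_eq_zero_of_lt (hai.trans i.lt_succ_self)]
  obtain ⟨d, rfl⟩ := Nat.exists_eq_add_of_le hia
  have hlow := Nat.choose_succ_right_eq (i + d) i
  have hup := Nat.choose_mul_succ_eq (2 * (i + d) + j) (2 * (i + d))
  rw [Nat.add_sub_cancel_left] at hlow
  rw [show 2 * (i + d) + j + 1 - 2 * (i + d) = j + 1 by omega] at hup
  zify at hlow hup ⊢
  linear_combination (2 * i + j + 1 : ℤ) * ((i + d).choose i : ℤ) ^ 2 * hup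
    - ((2 * (i + d) + j).choose (2 * (i + d)) : ℤ) * (((i + d).choose (i + 1) : ℤ) * (i + 1)
      + ((i + d).choose i : ℤ) * d) * hlow

theorem Nat.sum_range_choose_sq_mul_choose_succ (a k : ℕ) :
    (a + k + 1) ^ 2 * ∑ i ∈ range (k + 1), a.choose i ^ 2 * (2 * a + (k - i)).choose (2 * a)
      = (k + 1) ^ 2 * ∑ i ∈ range (k + 2),
          a.choose i ^ 2 * (2 * a + (k + 1 - i)).choose (2 * a) := by
  set G : ℕ → ℕ := fun i => i ^ 2 * (a.choose i ^ 2 * (2 * a + (k + 1 - i)).choose (2 * a))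
  have step : ∀ i ∈ range (k + 1),
      (a + k + 1) ^ 2 * (a.choose i ^ 2 * (2 * a + (k - i)).choose (2 * a)) + G i
        = (k + 1) ^ 2 * (a.choose i ^ 2 * (2 * a + (k + 1 - i)).choose (2 * a)) + G (i + 1) := by
    intro i hi
    obtain ⟨j, rfl⟩ := Nat.exists_eq_add_of_le (Nat.lt_succ_iff.mp (mem_range.mp hi))
    simp only [G, show i + j + 1 - i = j + 1 by omega, show i + j + 1 - (i + 1) = j by omega,
      Nat.add_sub_cancel_left, ← add_assoc]
    exact Nat.choose_sq_mul_choose_telescope a i j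
  have shift : ∑ i ∈ range (k + 1), G (i + 1) = ∑ i ∈ range (k + 1), G i + G (k + 1) := by
    rw [← sum_range_succ, sum_range_succ' G]
    simp [G]
  have hsum := sum_congr rfl step
  rw [sum_add_distrib, sum_add_distrib, ← mul_sum, ← mul_sum, shift] at hsum
  simp only [G, Nat.sub_self, add_zero, Nat.choose_self, mul_one] at hsum
  rw [sum_range_succ _ (k + 1), Nat.sub_self, add_zero, Nat.choose_self, mul_one]
  linarith

theorem Nat.sum_range_choose_sq_mul_choose_eq_choose_sq (a k : ℕ) :
    ∑ i ∈ range (k + 1), a.choose i ^ 2 * (2 * a + (k - i)).choose (2 * a)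
      = (a + k).choose k ^ 2 := by
  induction k with
  | zero => simp
  | succ k ih =>
    refine Nat.eq_of_mul_eq_mul_left (pow_pos k.succ_pos 2) ?_
    rw [← Nat.sum_range_choose_sq_mul_choose_succ, ih, ← mul_pow, ← add_assoc,
      Nat.add_one_mul_choose_eq, mul_pow, mul_comm]

namespace PowerSeries

variable {R : Type*}

theorem mk_choose_sq_eq_sum [CommSemiring R] (a : ℕ) :
    mk (fun i => (a.choose i : R) ^ 2)
      = ∑ i ∈ range (a + 1), C ((a.choose i : R) ^ 2) * X ^ i := by
  ext m
  simp only [coeff_mk, map_sum, coeff_C_mul_X_pow, sum_ite_eq, mem_range]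
  split_ifs with hm
  · rfl
  · simp [Nat.choose_eq_zero_of_lt (not_lt.mp hm)]

theorem mk_add_choose_sq_eq_mul [CommSemiring R] (a : ℕ) :
    mk (fun k => ((a + k).choose k : R) ^ 2)
      = mk (fun i => (a.choose i : R) ^ 2) * mk (fun k => ((2 * a + k).choose (2 * a) : R)) := by
  ext k
  simp only [coeff_mul, coeff_mk]
  rw [Nat.sum_antidiagonal_eq_sum_range_succ
    (fun i j => (a.choose i : R) ^ 2 * ((2 * a + j).choose (2 * a) : R)), Nat.succ_eq_add_one]
  exact_mod_cast
    congrArg (Nat.cast (R := R)) (Nat.sum_range_choose_sq_mul_choose_eq_choose_sq a k).symm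

theorem one_sub_X_pow_mul_mk_add_choose_sq [CommRing R] (a : ℕ) :
    (1 - X : R⟦X⟧) ^ (2 * a + 1) * mk (fun k => ((a + k).choose k : R) ^ 2)
      = mk (fun i => (a.choose i : R) ^ 2) := by
  rw [mk_add_choose_sq_eq_mul, mul_left_comm, mul_comm _ (mk _),
    mk_add_choose_mul_one_sub_pow_eq_one, mul_one]

end PowerSeries

/-- the completely degenerate case, via Euler's transformation: in
`ℚ[[t]]`, `(1-t)^{2n-1} · Σ_k binom(n+k-1,k)² t^k = Σ_{k=0}^{n-1} binom(n-1,k)² t^k`. -/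
theorem euler_transformation_central_binomial (n : ℕ) (hn : 1 ≤ n) :
    (1 - PowerSeries.X : PowerSeries ℚ) ^ (2 * n - 1) *
        PowerSeries.mk (fun k => ((n + k - 1).choose k : ℚ) ^ 2)
      = ∑ k ∈ Finset.range n,
          PowerSeries.C (R := ℚ) (((n - 1).choose k : ℚ) ^ 2) * PowerSeries.X ^ k := by
  obtain ⟨a, rfl⟩ := Nat.exists_eq_add_of_le' hn
  rw [show 2 * (a + 1) - 1 = 2 * a + 1 by omega, Nat.add_sub_cancel]
  simp only [add_right_comm a 1, Nat.add_sub_cancel]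
  rw [one_sub_X_pow_mul_mk_add_choose_sq, mk_choose_sq_eq_sum]
end

section
/- Let n ≥ 1 and let Γ be a finite subgroup of the unitary group U_n(ℂ). Then there exists a function G, analytic on a neighborhood N of 1 in ℂ, such that G(x) = (1 − x)^{2n}·M_Γ(x) for all x ∈ N with |x| < 1, and moreover G(1) = 1/|Γ| and G′(1) = 0. (Equivalently: the Hilbert series of the real invariants of Γ has a pole of order exactly 2n at x = 1 with Laurent coefficients γ_0 = 1/|Γ| and γ_1 = 0.) -/
/-!
For `g ∈ Γ`, `det (1 - x g) * det (1 - x g⁻¹) = χ_g(x) χ_{g⁻¹}(x)` is a monic polynomial of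
degree `2n` whose zero at `x = 1` has order `m(g) + m(g⁻¹)`, where `m(h)` is the multiplicity of
the eigenvalue `1` of `h`. A matrix of finite order is diagonalizable, so `m(h) = n` forces
`h = 1`. Hence after multiplying by `(1 - x) ^ (2n)` the summand of `g = 1` becomes the constant
`1`, and every other summand extends analytically across `x = 1` with a zero of order `≥ 2`
there, contributing neither to the value nor to the derivative at `1`.
-/

open Filter Topology Finset

open Polynomial

namespace Polynomial

theorem rootMultiplicity_le_natDegree {R : Type*} [CommRing R] [IsDomain R]
    (p : R[X]) (a : R) : p.rootMultiplicity a ≤ p.natDegree := by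
  classical
  rw [← count_roots]
  exact (Multiset.count_le_card a p.roots).trans (card_roots' p)

variable {K : Type*} [Field K]

/-- `x ↦ (x - a) ^ d / p x` with the factor `(X - C a) ^ rootMultiplicity a p` of `p` cancelled,
which extends it across `a` when `rootMultiplicity a p ≤ d`. -/
noncomputable def extendedSubPowDiv (p : K[X]) (a : K) (d : ℕ) (x : K) : K :=
  (x - a) ^ (d - p.rootMultiplicity a) * (eval x (p /ₘ (X - C a) ^ p.rootMultiplicity a))⁻¹

theorem extendedSubPowDiv_eq {p : K[X]} {a x : K} {d : ℕ} (hd : p.rootMultiplicity a ≤ d)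
    (hx : x ≠ a) : p.extendedSubPowDiv a d x = (x - a) ^ d * (p.eval x)⁻¹ := by
  have hxa : (x - a) ^ p.rootMultiplicity a ≠ 0 := pow_ne_zero _ (sub_ne_zero.mpr hx)
  conv_rhs => rw [← pow_mul_divByMonic_rootMultiplicity_eq p a, ← Nat.sub_add_cancel hd]
  simp only [extendedSubPowDiv, eval_mul, eval_pow, eval_sub, eval_X, eval_C, pow_add,
    mul_inv, mul_assoc, mul_inv_cancel_left₀ hxa]

theorem extendedSubPowDiv_X_sub_C_pow (a : K) (d : ℕ) :
    ((X - C a) ^ d).extendedSubPowDiv a d = fun _ => 1 := by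
  have hdiv : (X - C a) ^ d /ₘ (X - C a) ^ d = 1 := by
    simpa using mul_divByMonic_cancel_left (1 : K[X]) ((monic_X_sub_C a).pow d)
  funext x
  simp [extendedSubPowDiv, rootMultiplicity_X_sub_C_pow, hdiv]

theorem extendedSubPowDiv_self_of_lt {p : K[X]} {a : K} {d : ℕ} (hd : p.rootMultiplicity a < d) :
    p.extendedSubPowDiv a d a = 0 := by
  simp [extendedSubPowDiv, Nat.sub_ne_zero_of_lt hd]

variable {𝕜 : Type*} [NontriviallyNormedField 𝕜] {p : 𝕜[X]} {a : 𝕜} {d : ℕ}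

theorem analyticAt_inv_eval_divByMonic_pow_rootMultiplicity (hp : p ≠ 0) :
    AnalyticAt 𝕜 (fun x => (eval x (p /ₘ (X - C a) ^ p.rootMultiplicity a))⁻¹) a :=
  (AnalyticOnNhd.eval_polynomial _ a trivial).inv
    (eval_divByMonic_pow_rootMultiplicity_ne_zero a hp)

theorem analyticAt_extendedSubPowDiv (hp : p ≠ 0) :
    AnalyticAt 𝕜 (p.extendedSubPowDiv a d) a :=
  ((analyticAt_id.sub analyticAt_const).pow _).mul
    (analyticAt_inv_eval_divByMonic_pow_rootMultiplicity hp)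

theorem hasDerivAt_extendedSubPowDiv_of_add_two_le (hp : p ≠ 0)
    (hd : p.rootMultiplicity a + 2 ≤ d) : HasDerivAt (p.extendedSubPowDiv a d) 0 a := by
  have hj : d - p.rootMultiplicity a - 1 ≠ 0 := by omega
  have hu : HasDerivAt (fun x => (x - a) ^ (d - p.rootMultiplicity a)) 0 a := by
    simpa [hj] using ((hasDerivAt_id a).sub_const a).fun_pow (d - p.rootMultiplicity a)
  have hv := (analyticAt_inv_eval_divByMonic_pow_rootMultiplicity (a := a) hp).differentiableAt
  have h := hu.fun_mul hv.hasDerivAt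
  rwa [zero_mul, sub_self, zero_pow (by omega), zero_mul, add_zero] at h

end Polynomial

namespace Matrix

variable {ι : Type*} [Fintype ι] [DecidableEq ι]

theorem det_one_sub_smul_of_mul_eq_one {R : Type*} [CommRing R] {A B : Matrix ι ι R}
    (h : A * B = 1) (x : R) :
    det (1 - x • A) = (-1) ^ Fintype.card ι * A.det * B.charpoly.eval x := by
  have hfactor : 1 - x • A = -(A * (scalar ι x - B)) := by
    rw [Matrix.mul_sub, h, scalar_apply, ← smul_one_eq_diagonal, Matrix.mul_smul, Matrix.mul_one,
      neg_sub]
  rw [hfactor, det_neg, det_mul, eval_charpoly, mul_assoc]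

theorem det_one_sub_smul_mul_det_one_sub_smul {R : Type*} [CommRing R] {A B : Matrix ι ι R}
    (h : A * B = 1) (x : R) :
    det (1 - x • A) * det (1 - x • B) = (A.charpoly * B.charpoly).eval x := by
  have hdet : A.det * B.det = 1 := by rw [← det_mul, h, det_one]
  rw [det_one_sub_smul_of_mul_eq_one h, det_one_sub_smul_of_mul_eq_one (mul_eq_one_comm.mp h),
    eval_mul]
  calc (-1) ^ Fintype.card ι * A.det * B.charpoly.eval x *
        ((-1) ^ Fintype.card ι * B.det * A.charpoly.eval x)
      = ((-1) ^ Fintype.card ι * (-1) ^ Fintype.card ι) * (A.det * B.det) *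
          (A.charpoly.eval x * B.charpoly.eval x) := by ring
    _ = A.charpoly.eval x * B.charpoly.eval x := by
      rw [← mul_pow, neg_one_mul, neg_neg, one_pow, hdet, one_mul, one_mul]

variable {K : Type*} [Field K] {A : Matrix ι ι K} {k : ℕ}

theorem eq_one_of_pow_eq_one_of_charpoly_eq (hk : (k : K) ≠ 0) (hA : A ^ k = 1)
    (hcp : A.charpoly = (X - C 1) ^ Fintype.card ι) : A = 1 := by
  rcases isEmpty_or_nonempty ι with hι | hι
  · exact Subsingleton.elim _ _
  have hsep : Squarefree ((X : K[X]) ^ k - C 1) :=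
    (separable_X_pow_sub_C 1 hk one_ne_zero).squarefree
  have hmin : Squarefree (minpoly K A) :=
    hsep.squarefree_of_dvd (minpoly.dvd_iff.mpr (by simp [hA]))
  -- `minpoly K A` is squarefree and divides `(X - 1) ^ n`, so it divides `X - 1`.
  have hdvd : minpoly K A ∣ X - C 1 :=
    (hmin.dvd_pow_iff_dvd Fintype.card_ne_zero).mp (hcp ▸ minpoly_dvd_charpoly A)
  simpa [sub_eq_zero] using minpoly.dvd_iff.mp hdvd

theorem rootMultiplicity_one_charpoly_lt (hk : (k : K) ≠ 0) (hA : A ^ k = 1) (hA1 : A ≠ 1) :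
    A.charpoly.rootMultiplicity 1 < Fintype.card ι := by
  by_contra! hle
  have hdvd : (X - C 1) ^ Fintype.card ι ∣ A.charpoly :=
    (le_rootMultiplicity_iff A.charpoly_monic.ne_zero).mp hle
  refine hA1 (eq_one_of_pow_eq_one_of_charpoly_eq hk hA ?_)
  refine eq_of_monic_of_dvd_of_natDegree_le ((monic_X_sub_C 1).pow _) A.charpoly_monic hdvd ?_
  rw [natDegree_pow, natDegree_X_sub_C, charpoly_natDegree_eq_dim, mul_one]

end Matrix

section RealMolienSeries

variable {G ι 𝕜 : Type*} [Group G] [Fintype ι] [DecidableEq ι]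

theorem MonoidHom.rootMultiplicity_one_charpoly_lt {K : Type*} [Field K] [CharZero K] [Finite G]
    {φ : G →* Matrix ι ι K} (hφ : Function.Injective φ) {g : G} (hg : g ≠ 1) :
    (φ g).charpoly.rootMultiplicity 1 < Fintype.card ι :=
  Matrix.rootMultiplicity_one_charpoly_lt
    (Nat.cast_ne_zero.mpr (isOfFinOrder_of_finite g).orderOf_pos.ne')
    (by rw [← map_pow, pow_orderOf_eq_one, map_one]) ((map_ne_one_iff φ hφ).mpr hg)

variable [NontriviallyNormedField 𝕜] (φ : G →* Matrix ι ι 𝕜)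

noncomputable def realMolienDenominator (g : G) : 𝕜[X] :=
  (φ g).charpoly * (φ g⁻¹).charpoly

theorem eval_realMolienDenominator (g : G) (x : 𝕜) :
    (realMolienDenominator φ g).eval x = (1 - x • φ g).det * (1 - x • φ g⁻¹).det :=
  (Matrix.det_one_sub_smul_mul_det_one_sub_smul (map_mul_eq_one φ (mul_inv_cancel g)) x).symm

theorem realMolienDenominator_monic (g : G) : (realMolienDenominator φ g).Monic :=
  (φ g).charpoly_monic.mul (φ g⁻¹).charpoly_monic

theorem natDegree_realMolienDenominator (g : G) :
    (realMolienDenominator φ g).natDegree = 2 * Fintype.card ι := by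
  rw [realMolienDenominator, (φ g).charpoly_monic.natDegree_mul (φ g⁻¹).charpoly_monic,
    Matrix.charpoly_natDegree_eq_dim, Matrix.charpoly_natDegree_eq_dim, two_mul]

theorem realMolienDenominator_one :
    realMolienDenominator φ 1 = (X - C 1) ^ (2 * Fintype.card ι) := by
  rw [realMolienDenominator, inv_one, map_one, Matrix.charpoly_one, map_one, ← pow_add, two_mul]

theorem rootMultiplicity_one_realMolienDenominator_add_two_le [CharZero 𝕜] [Finite G]
    {φ : G →* Matrix ι ι 𝕜} (hφ : Function.Injective φ) {g : G} (hg : g ≠ 1) :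
    (realMolienDenominator φ g).rootMultiplicity 1 + 2 ≤ 2 * Fintype.card ι := by
  have h := φ.rootMultiplicity_one_charpoly_lt hφ hg
  have hinv := φ.rootMultiplicity_one_charpoly_lt hφ (inv_ne_one.mpr hg)
  rw [realMolienDenominator, rootMultiplicity_mul (realMolienDenominator_monic φ g).ne_zero]
  omega

variable [Fintype G]

/-- The analytic continuation `G` of `(1 - x) ^ (2 n) M(x)` across `x = 1`, for `n = card ι` and
`M` the Molien series of real invariants of `φ`; as `2 n` is even, `(1 - x) ^ (2 n)` may be
replaced by `(x - 1) ^ (2 n)` in each summand. -/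
noncomputable def regularizedRealMolienSeries (x : 𝕜) : 𝕜 :=
  (Fintype.card G : 𝕜)⁻¹ *
    ∑ g, (realMolienDenominator φ g).extendedSubPowDiv 1 (2 * Fintype.card ι) x

theorem regularizedRealMolienSeries_eq {x : 𝕜} (hx : x ≠ 1) :
    regularizedRealMolienSeries φ x = (1 - x) ^ (2 * Fintype.card ι) *
      ((Fintype.card G : 𝕜)⁻¹ * ∑ g, ((1 - x • φ g).det * (1 - x • φ g⁻¹).det)⁻¹) := by
  have hterm (g : G) := extendedSubPowDiv_eq
    (((realMolienDenominator φ g).rootMultiplicity_le_natDegree 1).trans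
      (natDegree_realMolienDenominator φ g).le) hx
  simp only [regularizedRealMolienSeries, hterm, eval_realMolienDenominator, mul_sum]
  congr 1 with g
  rw [pow_mul, pow_mul, ← neg_sub, neg_sq]
  ring

theorem analyticAt_regularizedRealMolienSeries :
    AnalyticAt 𝕜 (regularizedRealMolienSeries φ) 1 := by
  have hterm (g : G) := analyticAt_extendedSubPowDiv (d := 2 * Fintype.card ι)
    (a := (1 : 𝕜)) (realMolienDenominator_monic φ g).ne_zero
  exact analyticAt_const.mul (Finset.analyticAt_fun_sum _ fun g _ => hterm g)

variable [CharZero 𝕜] {φ}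

theorem extendedSubPowDiv_realMolienDenominator_one [DecidableEq G]
    (hφ : Function.Injective φ) (g : G) :
    (realMolienDenominator φ g).extendedSubPowDiv 1 (2 * Fintype.card ι) 1 =
      if g = 1 then 1 else 0 := by
  split_ifs with hg
  · rw [hg, realMolienDenominator_one, extendedSubPowDiv_X_sub_C_pow]
  · exact extendedSubPowDiv_self_of_lt
      (by have := rootMultiplicity_one_realMolienDenominator_add_two_le hφ hg; omega)

theorem hasDerivAt_extendedSubPowDiv_realMolienDenominator (hφ : Function.Injective φ) (g : G) :
    HasDerivAt ((realMolienDenominator φ g).extendedSubPowDiv 1 (2 * Fintype.card ι)) 0 1 := by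
  rcases eq_or_ne g 1 with rfl | hg
  · rw [realMolienDenominator_one, extendedSubPowDiv_X_sub_C_pow]
    exact hasDerivAt_const 1 1
  · exact hasDerivAt_extendedSubPowDiv_of_add_two_le (realMolienDenominator_monic φ g).ne_zero
      (rootMultiplicity_one_realMolienDenominator_add_two_le hφ hg)

theorem regularizedRealMolienSeries_one (hφ : Function.Injective φ) :
    regularizedRealMolienSeries φ 1 = (Fintype.card G : 𝕜)⁻¹ := by
  classical
  simp [regularizedRealMolienSeries, extendedSubPowDiv_realMolienDenominator_one hφ]

theorem hasDerivAt_regularizedRealMolienSeries (hφ : Function.Injective φ) :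
    HasDerivAt (regularizedRealMolienSeries φ) 0 1 := by
  have h := (HasDerivAt.fun_sum (u := univ) fun g _ =>
    hasDerivAt_extendedSubPowDiv_realMolienDenominator hφ g).const_mul (Fintype.card G : 𝕜)⁻¹
  rwa [sum_const_zero, mul_zero] at h

end RealMolienSeries

theorem molien_series_real_invariants_leading_coefficients_general (n : ℕ)
    (Γ : Subgroup (Matrix.unitaryGroup (Fin n) ℂ)) [Fintype Γ] :
    ∃ (G : ℂ → ℂ) (N : Set ℂ), N ∈ 𝓝 (1 : ℂ) ∧ AnalyticOnNhd ℂ G N ∧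
      (∀ x ∈ N, ‖x‖ < 1 →
        G x = (1 - x) ^ (2 * n) *
          ((Fintype.card Γ : ℂ)⁻¹ * ∑ g : Γ,
            (Matrix.det (1 - x • ((g : Matrix.unitaryGroup (Fin n) ℂ) :
                Matrix (Fin n) (Fin n) ℂ)) *
              Matrix.det (1 - x • (((g⁻¹ : Γ) : Matrix.unitaryGroup (Fin n) ℂ) :
                Matrix (Fin n) (Fin n) ℂ)))⁻¹)) ∧
      G 1 = (Fintype.card Γ : ℂ)⁻¹ ∧
      deriv G 1 = 0 := by
  let φ : Γ →* Matrix (Fin n) (Fin n) ℂ :=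
    (Matrix.unitaryGroup (Fin n) ℂ).subtype.comp Γ.subtype
  have hφ : Function.Injective φ := Subtype.val_injective.comp Subtype.val_injective
  refine ⟨regularizedRealMolienSeries φ, {x | AnalyticAt ℂ (regularizedRealMolienSeries φ) x},
    (isOpen_analyticAt ℂ _).mem_nhds (analyticAt_regularizedRealMolienSeries φ), fun _ hx => hx,
    fun x _ hx => ?_, regularizedRealMolienSeries_one hφ,
    (hasDerivAt_regularizedRealMolienSeries hφ).deriv⟩
  have hx1 : x ≠ 1 := by rintro rfl; simp at hx
  have h := regularizedRealMolienSeries_eq φ hx1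
  rw [Fintype.card_fin] at h
  exact h

/-- for a finite subgroup `Γ` of `U_n(ℂ)`, the Molien series of real
invariants `M_Γ(x) = (1/|Γ|) Σ_{g∈Γ} 1/(det(I - xg)·det(I - xg⁻¹))` has an analytic
extension `G` of `(1-x)^{2n} M_Γ(x)` near `x = 1` with `G(1) = 1/|Γ|` (i.e. `γ₀ = 1/|Γ|`)
and `G′(1) = 0` (i.e. `γ₁ = 0`). -/
theorem molien_series_real_invariants_leading_coefficients (n : ℕ) (hn : 1 ≤ n)
    (Γ : Subgroup (Matrix.unitaryGroup (Fin n) ℂ)) [Fintype Γ] :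
    ∃ (G : ℂ → ℂ) (N : Set ℂ), N ∈ 𝓝 (1 : ℂ) ∧ AnalyticOnNhd ℂ G N ∧
      (∀ x ∈ N, ‖x‖ < 1 →
        G x = (1 - x) ^ (2 * n) *
          ((Fintype.card Γ : ℂ)⁻¹ * ∑ g : Γ,
            (Matrix.det (1 - x • ((g : Matrix.unitaryGroup (Fin n) ℂ) :
                Matrix (Fin n) (Fin n) ℂ)) *
              Matrix.det (1 - x • (((g⁻¹ : Γ) : Matrix.unitaryGroup (Fin n) ℂ) :
                Matrix (Fin n) (Fin n) ℂ)))⁻¹)) ∧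
      G 1 = (Fintype.card Γ : ℂ)⁻¹ ∧
      deriv G 1 = 0 :=
  molien_series_real_invariants_leading_coefficients_general n Γ
end

section
/- Let n ≥ 1 and let Γ be a finite subgroup of the unitary group U_n(ℂ). Let G be a function analytic on a neighborhood N of 1 in ℂ with G(x) = (1 − x)^{2n}·M_Γ(x) for all x ∈ N with |x| < 1, and set γ_k = (−1)^k G^{(k)}(1)/k! for k ≥ 0. Then γ_3 − 2γ_4 + γ_5 = 0; explicitly, −G‴(1)/6 − G⁗(1)/12 − G^{(5)}(1)/120 = 0. -/
/-!
Every `h ∈ Γ` is invertible, and `1 - x⁻¹ • h = h * (-x⁻¹) • (1 - x • h⁻¹)`; hence the rational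
function `f(x) = (1 - x)^{2n} M_Γ(x)` satisfies `f(1/x) = f(x)`. Being meromorphic at `1` and equal
to `G` on `|x| < 1`, it forces `G(x) = G(1/x)` near `1` by the identity theorem. Differentiating
`G(1/x)` gives `G⁽ᵏ⁾(1) = (-1)^k ∑_j L(k, j) G⁽ʲ⁾(1)` with the Lah numbers `L(k, j)`; the cases
`k = 1, 3, 5` combine to the stated relation.
-/

open Filter Topology Finset

/-- The unsigned Lah numbers `L(k, j)`. -/
def lah : ℕ → ℕ → ℕ
  | 0, 0 => 1
  | 0, _ + 1 => 0
  | _ + 1, 0 => 0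
  | k + 1, j + 1 => (k + j + 1) * lah k (j + 1) + lah k j

lemma lah_eq_zero_of_lt : ∀ {k j : ℕ}, k < j → lah k j = 0
  | 0, _ + 1, _ => rfl
  | k + 1, j + 1, h => by
    simp [lah, lah_eq_zero_of_lt (by omega : k < j + 1), lah_eq_zero_of_lt (by omega : k < j)]

lemma sum_range_lah_succ {R : Type*} [CommRing R] (k : ℕ) (T : ℕ → R) :
    ∑ j ∈ range (k + 2), (lah (k + 1) j : R) * T j =
      ∑ j ∈ range (k + 1), (lah k j : R) * ((k + j) * T j + T (j + 1)) := by
  set a : ℕ → R := fun j => (k + j) * lah k j * T j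
  have ha : ∑ j ∈ range (k + 1), a (j + 1) = ∑ j ∈ range (k + 1), a j := by
    have h0 : a 0 = 0 := by cases k <;> simp [a, lah]
    have hlast : a (k + 1) = 0 := by simp [a, lah_eq_zero_of_lt (Nat.lt_succ_self k)]
    have := sum_range_succ' a (k + 1)
    rwa [sum_range_succ, hlast, h0, add_zero, add_zero, eq_comm] at this
  rw [sum_range_succ', show lah (k + 1) 0 = 0 from rfl]
  simp only [lah, Nat.cast_add, Nat.cast_mul, Nat.cast_one, Nat.cast_zero, zero_mul, add_zero]
  have hsplit : ∀ j : ℕ, (((k : R) + j + 1) * lah k (j + 1) + lah k j) * T (j + 1)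
      = a (j + 1) + lah k j * T (j + 1) := fun j => by simp only [a]; push_cast; ring
  simp only [hsplit, sum_add_distrib, ha, a, mul_add]
  congr 1
  exact sum_congr rfl fun j _ => by ring

section Inversion

variable {𝕜 : Type*} [NontriviallyNormedField 𝕜]

lemma tendsto_inv_nhdsNE_one : Tendsto (fun x : 𝕜 => x⁻¹) (𝓝[≠] 1) (𝓝[≠] 1) := by
  refine tendsto_nhdsWithin_of_tendsto_nhds_of_eventually_within _ ?_ ?_
  · simpa using (continuousAt_inv₀ (one_ne_zero (α := 𝕜))).tendsto.mono_left nhdsWithin_le_nhds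
  · filter_upwards [self_mem_nhdsWithin] with x hx
    simpa using hx

lemma HasDerivAt.inv_pow_mul_comp_inv {g : 𝕜 → 𝕜} {g' x : 𝕜} (hx : x ≠ 0)
    (hg : HasDerivAt g g' x⁻¹) (m : ℕ) :
    HasDerivAt (fun y => y⁻¹ ^ m * g y⁻¹)
      (-(m * x⁻¹ ^ (m + 1) * g x⁻¹ + x⁻¹ ^ (m + 2) * g')) x := by
  have hinv : HasDerivAt (fun y : 𝕜 => y⁻¹) (-x⁻¹ ^ 2) x := by
    simpa [inv_pow] using hasDerivAt_inv hx
  refine ((hinv.fun_pow m).fun_mul (hg.comp x hinv)).congr_deriv ?_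
  rcases m with _ | m
  · simp [mul_comm]
  · simp only [Function.comp_apply, Nat.add_sub_cancel, Nat.cast_succ]
    ring

theorem AnalyticAt.eventuallyEq_comp_inv_of_frequently_eq {G f : 𝕜 → 𝕜}
    (hG : AnalyticAt 𝕜 G 1) (hf : MeromorphicAt f 1) (hGf : ∃ᶠ x in 𝓝[≠] 1, G x = f x)
    (hf_inv : ∀ x ≠ 0, f x⁻¹ = f x) :
    G =ᶠ[𝓝 1] fun x => G x⁻¹ := by
  have hGinv : AnalyticAt 𝕜 (fun x => G x⁻¹) 1 :=
    (by rwa [inv_one] : AnalyticAt 𝕜 G 1⁻¹).comp (analyticAt_inv one_ne_zero)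
  have hGf' : G =ᶠ[𝓝[≠] 1] f := (hG.meromorphicAt.frequently_eq_iff_eventuallyEq hf).1 hGf
  have hGf_inv : (fun x => G x⁻¹) =ᶠ[𝓝[≠] 1] f := by
    filter_upwards [hGf'.comp_tendsto tendsto_inv_nhdsNE_one,
      nhdsWithin_le_nhds (eventually_ne_nhds one_ne_zero)] with x hx hx0
    rw [← hf_inv x hx0]
    exact hx
  exact (hG.frequently_eq_iff_eventually_eq hGinv).1 (hGf'.trans hGf_inv.symm).frequently

variable [CompleteSpace 𝕜]

lemma AnalyticAt.hasDerivAt_iteratedDeriv {G : 𝕜 → 𝕜} {x : 𝕜} (hG : AnalyticAt 𝕜 G x)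
    (j : ℕ) : HasDerivAt (iteratedDeriv j G) (iteratedDeriv (j + 1) G x) x := by
  rw [iteratedDeriv_succ, iteratedDeriv_eq_iterate]
  exact (hG.iterated_deriv j).differentiableAt.hasDerivAt

theorem iteratedDeriv_comp_inv_eq_sum_lah {G : 𝕜 → 𝕜} (k : ℕ) {x : 𝕜} (hx : x ≠ 0)
    (hG : AnalyticAt 𝕜 G x⁻¹) :
    iteratedDeriv k (fun y => G y⁻¹) x =
      (-1) ^ k * ∑ j ∈ range (k + 1), lah k j * (x⁻¹ ^ (k + j) * iteratedDeriv j G x⁻¹) := by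
  induction k generalizing x with
  | zero => simp [lah]
  | succ k ih =>
    have hnear : iteratedDeriv k (fun y => G y⁻¹) =ᶠ[𝓝 x] fun y =>
        (-1) ^ k * ∑ j ∈ range (k + 1), lah k j * (y⁻¹ ^ (k + j) * iteratedDeriv j G y⁻¹) := by
      filter_upwards [eventually_ne_nhds hx,
        (continuousAt_inv₀ hx).eventually hG.eventually_analyticAt] with y hy hGy
      exact ih hy hGy
    have hderiv := (HasDerivAt.fun_sum (u := range (k + 1)) fun j _ =>
      ((hG.hasDerivAt_iteratedDeriv j).inv_pow_mul_comp_inv hx (k + j)).const_mul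
        (lah k j : 𝕜)).const_mul ((-1 : 𝕜) ^ k)
    rw [iteratedDeriv_succ, hnear.deriv_eq, hderiv.deriv, sum_range_lah_succ, pow_succ,
      mul_sum, mul_sum]
    refine sum_congr rfl fun j _ => ?_
    push_cast
    ring

theorem iteratedDeriv_eq_sum_lah_of_eventuallyEq_comp_inv {G : 𝕜 → 𝕜} (hG : AnalyticAt 𝕜 G 1)
    (hsym : G =ᶠ[𝓝 1] fun x => G x⁻¹) (k : ℕ) :
    iteratedDeriv k G 1 = (-1) ^ k * ∑ j ∈ range (k + 1), lah k j * iteratedDeriv j G 1 := by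
  rw [(hsym.iteratedDeriv k).eq_of_nhds,
    iteratedDeriv_comp_inv_eq_sum_lah k one_ne_zero (by rwa [inv_one])]
  simp

theorem iteratedDeriv_three_four_five_of_eventuallyEq_comp_inv [CharZero 𝕜] {G : 𝕜 → 𝕜}
    (hG : AnalyticAt 𝕜 G 1) (hsym : G =ᶠ[𝓝 1] fun x => G x⁻¹) :
    -(iteratedDeriv 3 G 1) / 6 - iteratedDeriv 4 G 1 / 12 - iteratedDeriv 5 G 1 / 120 = 0 := by
  have h1 := iteratedDeriv_eq_sum_lah_of_eventuallyEq_comp_inv hG hsym 1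
  have h3 := iteratedDeriv_eq_sum_lah_of_eventuallyEq_comp_inv hG hsym 3
  have h5 := iteratedDeriv_eq_sum_lah_of_eventuallyEq_comp_inv hG hsym 5
  simp only [sum_range_succ, sum_range_zero, lah, Nat.reduceAdd, Nat.reduceMul] at h1 h3 h5
  push_cast at h1 h3 h5
  linear_combination (-1 / 4 : 𝕜) * h1 + (1 / 6 : 𝕜) * h3 + (-1 / 240 : 𝕜) * h5

end Inversion

lemma frequently_norm_lt_one_nhdsNE_one : ∃ᶠ x in 𝓝[≠] (1 : ℂ), ‖x‖ < 1 := by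
  have hreal : Tendsto (fun t : ℝ => (t : ℂ)) (𝓝[<] 1) (𝓝[≠] 1) := by
    refine tendsto_nhdsWithin_of_tendsto_nhds_of_eventually_within _ ?_ ?_
    · simpa using Complex.continuous_ofReal.continuousAt.tendsto.mono_left
        (nhdsWithin_le_nhds (a := (1 : ℝ)))
    · filter_upwards [self_mem_nhdsWithin] with t ht
      simpa using (Set.mem_Iio.1 ht).ne
  refine hreal.frequently (Eventually.frequently ?_)
  filter_upwards [Ioo_mem_nhdsLT (zero_lt_one' ℝ)] with t ht
  rw [Complex.norm_real, Real.norm_of_nonneg ht.1.le]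
  exact ht.2

section Matrix

variable {ι K : Type*} [Fintype ι] [DecidableEq ι] [Field K] {M M' : Matrix ι ι K}

lemma Matrix.det_one_sub_inv_smul (hM : M * M' = 1) {x : K} (hx : x ≠ 0) :
    (1 - x⁻¹ • M).det = (-x⁻¹) ^ Fintype.card ι * M.det * (1 - x • M').det := by
  have hfactor : 1 - x⁻¹ • M = M * ((-x⁻¹) • (1 - x • M')) := by
    rw [Matrix.mul_smul, Matrix.mul_sub, Matrix.mul_one, Matrix.mul_smul, hM, smul_sub,
      smul_smul, neg_mul, inv_mul_cancel₀ hx]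
    simp only [neg_smul, one_smul]
    abel
  rw [hfactor, Matrix.det_mul, Matrix.det_smul]
  ring

lemma Matrix.det_one_sub_inv_smul_mul (hM : M * M' = 1) {x : K} (hx : x ≠ 0) :
    (1 - x⁻¹ • M).det * (1 - x⁻¹ • M').det =
      x⁻¹ ^ (2 * Fintype.card ι) * ((1 - x • M).det * (1 - x • M').det) := by
  have hdet : M.det * M'.det = 1 := by rw [← Matrix.det_mul, hM, Matrix.det_one]
  have hpow : (-x⁻¹) ^ Fintype.card ι * (-x⁻¹) ^ Fintype.card ι = x⁻¹ ^ (2 * Fintype.card ι) := by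
    rw [← pow_add, ← two_mul, (even_two_mul _).neg_pow]
  rw [Matrix.det_one_sub_inv_smul hM hx, Matrix.det_one_sub_inv_smul (mul_eq_one_comm.1 hM) hx,
    ← hpow]
  linear_combination ((-x⁻¹) ^ Fintype.card ι * (-x⁻¹) ^ Fintype.card ι *
    (1 - x • M).det * (1 - x • M').det) * hdet

end Matrix

lemma AnalyticAt.matrix_det {𝕜 ι : Type*} [NontriviallyNormedField 𝕜] [Fintype ι]
    [DecidableEq ι] {A : 𝕜 → Matrix ι ι 𝕜} {z : 𝕜} (hA : ∀ i j, AnalyticAt 𝕜 (fun x => A x i j) z) :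
    AnalyticAt 𝕜 (fun x => (A x).det) z := by
  simp only [Matrix.det_apply, Units.smul_def, zsmul_eq_mul]
  exact Finset.analyticAt_fun_sum _ fun σ _ =>
    analyticAt_const.mul (Finset.analyticAt_fun_prod _ fun i _ => hA _ _)

section Molien

variable {n : ℕ} (Γ : Subgroup (Matrix.unitaryGroup (Fin n) ℂ)) [Fintype Γ]

/-- `M_Γ(x)` for every `x : ℂ`; a summand with a pole at `x` contributes `0⁻¹ = 0`. -/
noncomputable def realMolienSeries (x : ℂ) : ℂ :=
  (Fintype.card Γ : ℂ)⁻¹ * ∑ h : Γ,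
    (Matrix.det (1 - x • ((h : Matrix.unitaryGroup (Fin n) ℂ) : Matrix (Fin n) (Fin n) ℂ)) *
      Matrix.det (1 - x • (((h⁻¹ : Γ) : Matrix.unitaryGroup (Fin n) ℂ) :
        Matrix (Fin n) (Fin n) ℂ)))⁻¹

lemma meromorphicAt_realMolienSeries (z : ℂ) : MeromorphicAt (realMolienSeries Γ) z := by
  have hdet (M : Matrix (Fin n) (Fin n) ℂ) : AnalyticAt ℂ (fun x : ℂ => (1 - x • M).det) z :=
    AnalyticAt.matrix_det fun i j => by
      simp only [Matrix.sub_apply, Matrix.smul_apply, smul_eq_mul]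
      fun_prop
  exact (MeromorphicAt.const _ z).fun_mul
    (MeromorphicAt.fun_sum fun h _ => ((hdet _).mul (hdet _)).meromorphicAt.fun_inv)

lemma one_sub_pow_mul_realMolienSeries_inv {x : ℂ} (hx : x ≠ 0) :
    (1 - x⁻¹) ^ (2 * n) * realMolienSeries Γ x⁻¹ = (1 - x) ^ (2 * n) * realMolienSeries Γ x := by
  have hterm (h : Γ) := Matrix.det_one_sub_inv_smul_mul
    (M := ((h : Matrix.unitaryGroup (Fin n) ℂ) : Matrix (Fin n) (Fin n) ℂ))
    (M' := (((h⁻¹ : Γ) : Matrix.unitaryGroup (Fin n) ℂ) : Matrix (Fin n) (Fin n) ℂ)) (by simp) hx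
  have hfactor : (1 - x⁻¹) ^ (2 * n) = x⁻¹ ^ (2 * n) * (1 - x) ^ (2 * n) := by
    rw [← mul_pow, ← (even_two_mul n).neg_pow, mul_sub, mul_one, inv_mul_cancel₀ hx, neg_sub]
  simp only [realMolienSeries, hterm, Fintype.card_fin, mul_inv, inv_pow, inv_inv, ← mul_sum,
    hfactor]
  field_simp

end Molien

theorem molien_series_real_invariants_higher_relation_general (n : ℕ)
    (Γ : Subgroup (Matrix.unitaryGroup (Fin n) ℂ)) [Fintype Γ]
    (G : ℂ → ℂ) (N : Set ℂ) (hN : N ∈ 𝓝 (1 : ℂ)) (hG : AnalyticOnNhd ℂ G N)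
    (hGeq : ∀ x ∈ N, ‖x‖ < 1 →
      G x = (1 - x) ^ (2 * n) *
        ((Fintype.card Γ : ℂ)⁻¹ * ∑ h : Γ,
          (Matrix.det (1 - x • ((h : Matrix.unitaryGroup (Fin n) ℂ) :
              Matrix (Fin n) (Fin n) ℂ)) *
            Matrix.det (1 - x • (((h⁻¹ : Γ) : Matrix.unitaryGroup (Fin n) ℂ) :
              Matrix (Fin n) (Fin n) ℂ)))⁻¹)) :
    -(iteratedDeriv 3 G 1) / 6 - iteratedDeriv 4 G 1 / 12
        - iteratedDeriv 5 G 1 / 120 = 0 := by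
  have hG1 : AnalyticAt ℂ G 1 := hG 1 (mem_of_mem_nhds hN)
  have hGf : ∃ᶠ x in 𝓝[≠] 1, G x = (1 - x) ^ (2 * n) * realMolienSeries Γ x :=
    (frequently_norm_lt_one_nhdsNE_one.and_eventually (nhdsWithin_le_nhds hN)).mono
      fun x hx => hGeq x hx.2 hx.1
  have hsym : G =ᶠ[𝓝 1] fun x => G x⁻¹ :=
    hG1.eventuallyEq_comp_inv_of_frequently_eq
      ((by fun_prop : AnalyticAt ℂ (fun x : ℂ => (1 - x) ^ (2 * n)) 1).meromorphicAt.fun_mul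
        (meromorphicAt_realMolienSeries Γ 1)) hGf
      fun x hx => one_sub_pow_mul_realMolienSeries_inv Γ hx
  exact iteratedDeriv_three_four_five_of_eventuallyEq_comp_inv hG1 hsym

/-- for a finite subgroup `Γ ≤ U_n(ℂ)` and `G` an analytic extension of
`(1-x)^{2n} M_Γ(x)` near `x = 1`, the Laurent coefficients `γ_k = (-1)^k G^{(k)}(1)/k!`
satisfy `γ₃ - 2γ₄ + γ₅ = 0`, i.e. `-G‴(1)/6 - G⁗(1)/12 - G⁽⁵⁾(1)/120 = 0`. -/
theorem molien_series_real_invariants_higher_relation (n : ℕ) (hn : 1 ≤ n)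
    (Γ : Subgroup (Matrix.unitaryGroup (Fin n) ℂ)) [Fintype Γ]
    (G : ℂ → ℂ) (N : Set ℂ) (hN : N ∈ 𝓝 (1 : ℂ)) (hG : AnalyticOnNhd ℂ G N)
    (hGeq : ∀ x ∈ N, ‖x‖ < 1 →
      G x = (1 - x) ^ (2 * n) *
        ((Fintype.card Γ : ℂ)⁻¹ * ∑ h : Γ,
          (Matrix.det (1 - x • ((h : Matrix.unitaryGroup (Fin n) ℂ) :
              Matrix (Fin n) (Fin n) ℂ)) *
            Matrix.det (1 - x • (((h⁻¹ : Γ) : Matrix.unitaryGroup (Fin n) ℂ) :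
              Matrix (Fin n) (Fin n) ℂ)))⁻¹)) :
    -(iteratedDeriv 3 G 1) / 6 - iteratedDeriv 4 G 1 / 12
        - iteratedDeriv 5 G 1 / 120 = 0 :=
  molien_series_real_invariants_higher_relation_general n Γ G N hN hG hGeq
end

section
/- Let a, b, c be positive integers that are pairwise coprime, i.e., gcd(a,b) = gcd(b,c) = gcd(a,c) = 1. Then ab + bc + ca does not divide (a+b)(b+c)(c+a). -/
/-- for pairwise coprime positive integers `a, b, c`,
`ab + bc + ca` does not divide `(a+b)(b+c)(c+a)`. -/
theorem not_dvd_of_pairwise_coprime (a b c : ℕ) (ha : 0 < a) (hb : 0 < b) (hc : 0 < c)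
    (hab : Nat.Coprime a b) (hbc : Nat.Coprime b c) (hac : Nat.Coprime a c) :
    ¬ (a * b + b * c + c * a ∣ (a + b) * (b + c) * (c + a)) := by
  intro h
  set s := a * b + b * c + c * a with hs
  have key : (a + b) * (b + c) * (c + a) + a * b * c = (a + b + c) * s := by
    rw [hs]; ring
  have hdvd : s ∣ a * b * c := by
    have h1 : s ∣ (a + b) * (b + c) * (c + a) + a * b * c := key ▸ dvd_mul_left s (a + b + c)
    exact (Nat.dvd_add_right h).mp h1
  have hsa : Nat.Coprime s a := by
    have h2 : Nat.Coprime a (b * c + (b + c) * a) :=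
      (Nat.coprime_add_mul_right_right a (b * c) (b + c)).mpr (hab.mul_right hac)
    have : b * c + (b + c) * a = s := by rw [hs]; ring
    exact (this ▸ h2).symm
  have hsb : Nat.Coprime s b := by
    have h2 : Nat.Coprime b (a * c + (a + c) * b) :=
      (Nat.coprime_add_mul_right_right b (a * c) (a + c)).mpr (hab.symm.mul_right hbc)
    have : a * c + (a + c) * b = s := by rw [hs]; ring
    exact (this ▸ h2).symm
  have hsc : Nat.Coprime s c := by
    have h2 : Nat.Coprime c (a * b + (a + b) * c) :=
      (Nat.coprime_add_mul_right_right c (a * b) (a + b)).mpr (hac.symm.mul_right hbc.symm)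
    have : a * b + (a + b) * c = s := by rw [hs]; ring
    exact (this ▸ h2).symm
  have hcop : Nat.Coprime s (a * b * c) := (hsa.mul_right hsb).mul_right hsc
  have hone : s = 1 := hcop.eq_one_of_dvd hdvd
  rw [hs] at hone
  nlinarith [Nat.mul_pos ha hb, Nat.mul_pos hb hc, Nat.mul_pos hc ha]
end
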